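/- arXiv:1902.10075 — 8 statements merged into one kernel-verified Lean document; each statement's English description precedes it below -/
import Mathlib

section
/- Let n ≥ 2 and α ∈ ℝ. The function u(x) = (log|x|)^α satisfies -div(|∇u|^{n-2}∇u) ≥ 0 on {x ∈ ℝⁿ : |x| > 1} if and only if 0 ≤ α ≤ 1. -/
open Real

/-- The divergence of a vector field `F : ℝⁿ → ℝⁿ`. -/
noncomputable def vdiv (n : ℕ) (F : EuclideanSpace ℝ (Fin n) → EuclideanSpace ℝ (Fin n))
    (x : EuclideanSpace ℝ (Fin n)) : ℝ :=
  ∑ i : Fin n, fderiv ℝ F x (EuclideanSpace.single i (1 : ℝ)) i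

/-!
For a radial function `u = f(r)`, `r = ‖x‖`, the `p`-Laplace flux `|∇u|^{p-2} ∇u` is the radial
field `h(r) x` with `h = |f'|^{p-2} f' / r`, and `div (h(r) x) = n h + r h'`. For
`f = (log r)^α` and `p = n` one finds `h = C (log r)^β r^{-n}` with `C = |α|^{n-2} α` and
`β = (α - 1)(n - 1)`; the power `r^{-n}` makes the terms `n h` and `r · (r^{-n})'` cancel, leaving
`div = C β (log r)^{β-1} r^{-n}`. Hence `-Δₙ u ≥ 0` on `|x| > 1` iff `α (α - 1) ≤ 0`.
-/

open InnerProductSpace RealInnerProductSpace Topology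

section Radial

variable {E : Type*} [NormedAddCommGroup E] [InnerProductSpace ℝ E]

theorem hasFDerivAt_norm_of_ne_zero {x : E} (hx : x ≠ 0) :
    HasFDerivAt (‖·‖) (‖x‖⁻¹ • innerSL ℝ x) x := by
  have h := (hasStrictFDerivAt_norm_sq x).hasFDerivAt.sqrt (by positivity)
  simp only [Real.sqrt_sq (norm_nonneg _)] at h
  refine h.congr_fderiv ?_
  ext y
  have : ‖x‖ ≠ 0 := norm_ne_zero_iff.mpr hx
  simp only [smul_apply, innerSL_apply_apply, smul_eq_mul, two_smul, add_apply]
  field_simp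
  ring

theorem HasDerivAt.hasGradientAt_comp_norm [CompleteSpace E] {f : ℝ → ℝ} {f' : ℝ} {x : E}
    (hf : HasDerivAt f f' ‖x‖) (hx : x ≠ 0) :
    HasGradientAt (fun y => f ‖y‖) ((f' / ‖x‖) • x) x := by
  rw [hasGradientAt_iff_hasFDerivAt]
  refine (hf.comp_hasFDerivAt x (hasFDerivAt_norm_of_ne_zero hx)).congr_fderiv ?_
  ext y
  simp only [smul_apply, coe_innerSL_apply, smul_eq_mul, map_smul, toDual_apply_apply]
  ring

theorem HasDerivAt.hasFDerivAt_smul_norm {h : ℝ → ℝ} {h' : ℝ} {x : E}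
    (hh : HasDerivAt h h' ‖x‖) (hx : x ≠ 0) :
    HasFDerivAt (fun y => h ‖y‖ • y)
      (h ‖x‖ • ContinuousLinearMap.id ℝ E + ((h' / ‖x‖) • innerSL ℝ x).smulRight x) x := by
  refine ((hh.comp_hasFDerivAt x (hasFDerivAt_norm_of_ne_zero hx)).smul
    (hasFDerivAt_id x)).congr_fderiv ?_
  rw [smul_smul, div_eq_mul_inv]
  rfl

noncomputable def pLaplacianFlux [CompleteSpace E] (p : ℝ) (u : E → ℝ) (y : E) : E :=
  ‖gradient u y‖ ^ (p - 2) • gradient u y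

theorem HasDerivAt.pLaplacianFlux_comp_norm [CompleteSpace E] (p : ℝ) {f : ℝ → ℝ} {f' : ℝ}
    {y : E} (hf : HasDerivAt f f' ‖y‖) (hy : y ≠ 0) :
    pLaplacianFlux p (fun z => f ‖z‖) y = (|f'| ^ (p - 2) * f' / ‖y‖) • y := by
  rw [pLaplacianFlux, (hf.hasGradientAt_comp_norm hy).gradient, norm_smul, norm_div, norm_norm,
    div_mul_cancel₀ _ (norm_ne_zero_iff.mpr hy), smul_smul, Real.norm_eq_abs, mul_div_assoc]

end Radial

section Divergence

variable {n : ℕ}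

theorem Filter.EventuallyEq.vdiv_eq {F G : EuclideanSpace ℝ (Fin n) → EuclideanSpace ℝ (Fin n)}
    {x : EuclideanSpace ℝ (Fin n)} (h : F =ᶠ[𝓝 x] G) : vdiv n F x = vdiv n G x := by
  rw [vdiv, vdiv, h.fderiv_eq]

theorem vdiv_smul_norm {h : ℝ → ℝ} {h' : ℝ} {x : EuclideanSpace ℝ (Fin n)}
    (hh : HasDerivAt h h' ‖x‖) (hx : x ≠ 0) :
    vdiv n (fun y => h ‖y‖ • y) x = n * h ‖x‖ + ‖x‖ * h' := by
  rw [vdiv, (hh.hasFDerivAt_smul_norm hx).fderiv]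
  simp only [add_apply, smul_apply, ContinuousLinearMap.id_apply,
    ContinuousLinearMap.smulRight_apply, smul_eq_mul, PiLp.add_apply, PiLp.smul_apply,
    PiLp.single_eq_same, mul_one, Finset.sum_add_distrib, Finset.sum_const, Finset.card_univ,
    Fintype.card_fin, nsmul_eq_mul, add_right_inj, coe_innerSL_apply,
    EuclideanSpace.inner_single_right, one_mul, conj_trivial, mul_assoc, ← sq, ← Finset.mul_sum,
    ← EuclideanSpace.real_norm_sq_eq]
  field_simp [norm_ne_zero_iff.mpr hx]

end Divergence

theorem hasDerivAt_log_rpow (α : ℝ) {r : ℝ} (hr : 1 < r) :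
    HasDerivAt (fun t => log t ^ α) (α * log r ^ (α - 1) / r) r := by
  refine ((hasDerivAt_log (zero_lt_one.trans hr).ne').rpow_const (p := α)
    (Or.inl (log_pos hr).ne')).congr_deriv ?_
  field_simp

theorem hasDerivAt_log_rpow_mul_rpow (β q : ℝ) {r : ℝ} (hr : 1 < r) :
    HasDerivAt (fun t => log t ^ β * t ^ (-q))
      ((β * log r ^ (β - 1) - q * log r ^ β) * r ^ (-q) / r) r := by
  have hr0 : 0 < r := zero_lt_one.trans hr
  refine ((hasDerivAt_log_rpow β hr).mul
    (hasDerivAt_rpow_const (p := -q) (Or.inl hr0.ne'))).congr_deriv ?_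
  rw [rpow_sub hr0, rpow_one]
  field_simp
  ring

theorem abs_rpow_mul_div_log_rpow (p α : ℝ) {L r : ℝ} (hL : 0 < L) (hr : 0 < r) :
    |α * L ^ (α - 1) / r| ^ (p - 2) * (α * L ^ (α - 1) / r) / r
      = |α| ^ (p - 2) * α * (L ^ ((α - 1) * (p - 1)) * r ^ (-p)) := by
  have hrp : r ^ p = r ^ (p - 2) * r ^ 2 := by
    rw [← rpow_natCast, ← rpow_add hr, Nat.cast_ofNat, sub_add_cancel]
  rw [abs_div, abs_mul, abs_of_pos (rpow_pos_of_pos hL _), abs_of_pos hr,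
    div_rpow (by positivity) hr.le, mul_rpow (abs_nonneg α) (by positivity), ← rpow_mul hL.le,
    rpow_neg hr.le, hrp, show (α - 1) * (p - 1) = (α - 1) * (p - 2) + (α - 1) by ring,
    rpow_add hL]
  field_simp

theorem vdiv_pLaplacianFlux_log_rpow_norm (n : ℕ) (α : ℝ) {x : EuclideanSpace ℝ (Fin n)}
    (hx : 1 < ‖x‖) :
    vdiv n (pLaplacianFlux n (fun y => log ‖y‖ ^ α)) x =
      |α| ^ ((n : ℝ) - 2) * α * (α - 1) *
        ((n - 1) * (log ‖x‖ ^ ((α - 1) * (n - 1) - 1) * ‖x‖ ^ (-(n : ℝ)))) := by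
  set C := |α| ^ ((n : ℝ) - 2) * α
  set β := (α - 1) * ((n : ℝ) - 1)
  set h : ℝ → ℝ := fun t => C * (log t ^ β * t ^ (-(n : ℝ)))
  have hflux : pLaplacianFlux n (fun y => log ‖y‖ ^ α) =ᶠ[𝓝 x] fun y => h ‖y‖ • y := by
    filter_upwards [(isOpen_lt continuous_const continuous_norm).mem_nhds hx] with y hy
    have hy0 : 0 < ‖y‖ := zero_lt_one.trans hy
    rw [(hasDerivAt_log_rpow α hy).pLaplacianFlux_comp_norm _ (norm_pos_iff.mp hy0),
      abs_rpow_mul_div_log_rpow _ _ (log_pos hy) hy0]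
  have hx0 : 0 < ‖x‖ := zero_lt_one.trans hx
  rw [hflux.vdiv_eq, vdiv_smul_norm ((hasDerivAt_log_rpow_mul_rpow β n hx).const_mul C)
    (norm_pos_iff.mp hx0), rpow_sub_one (log_pos hx).ne']
  field_simp
  ring

theorem abs_rpow_mul_mul_sub_one_nonpos_iff (p α : ℝ) :
    |α| ^ p * α * (α - 1) ≤ 0 ↔ 0 ≤ α ∧ α ≤ 1 := by
  rcases eq_or_ne α 0 with rfl | hα
  · simp
  · have hpos : 0 < |α| ^ p := rpow_pos_of_pos (abs_pos.mpr hα) p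
    have hquad : α * (α - 1) ≤ 0 ↔ 0 ≤ α ∧ α ≤ 1 := by
      simpa using sub_mul_sub_nonpos_iff α (zero_le_one (α := ℝ))
    rw [mul_assoc, ← hquad]
    exact ⟨fun h => nonpos_of_mul_nonpos_right h hpos,
      fun h => mul_nonpos_of_nonneg_of_nonpos hpos.le h⟩

theorem log_power_supersolution_iff
    (n : ℕ) (hn : 2 ≤ n) (α : ℝ)
    (u : EuclideanSpace ℝ (Fin n) → ℝ) (hu : u = fun x => Real.log ‖x‖ ^ α) :
    (∀ x : EuclideanSpace ℝ (Fin n), 1 < ‖x‖ →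
        0 ≤ -vdiv n (fun y => ‖gradient u y‖ ^ ((n : ℝ) - 2) • gradient u y) x)
      ↔ (0 ≤ α ∧ α ≤ 1) := by
  subst hu
  have hn1 : (1 : ℝ) < n := by exact_mod_cast hn
  have hsign : ∀ x : EuclideanSpace ℝ (Fin n), 1 < ‖x‖ →
      (0 ≤ -vdiv n (pLaplacianFlux n fun y => log ‖y‖ ^ α) x ↔
        |α| ^ ((n : ℝ) - 2) * α * (α - 1) ≤ 0) := by
    intro x hx
    have hpos :
        0 < ((n : ℝ) - 1) * (log ‖x‖ ^ ((α - 1) * (n - 1) - 1) * ‖x‖ ^ (-(n : ℝ))) := by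
      have := log_pos hx
      have := sub_pos.mpr hn1
      positivity
    rw [vdiv_pLaplacianFlux_log_rpow_norm n α hx, neg_nonneg]
    exact ⟨fun h => nonpos_of_mul_nonpos_left h hpos,
      fun h => mul_nonpos_of_nonpos_of_nonneg h hpos.le⟩
  have : NeZero n := ⟨by omega⟩
  obtain ⟨x₀, hnorm⟩ := exists_norm_eq (EuclideanSpace ℝ (Fin n)) zero_le_two
  have hx₀ : 1 < ‖x₀‖ := hnorm ▸ one_lt_two
  rw [← abs_rpow_mul_mul_sub_one_nonpos_iff ((n : ℝ) - 2)]
  exact ⟨fun h => (hsign x₀ hx₀).mp (h x₀ hx₀), fun h x hx => (hsign x hx).mpr h⟩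
end

section
/- For every real Q > 1 and integer n ≥ 2, there exist exactly two exponents α' and α with 1 - 1/n < α' < 1 < α such that Q = α^n/(nα - n + 1) = (α')^n/(n α' - n + 1). -/
/-!
Clearing the positive denominator, the equation becomes `g α = 0` for
`g α = α ^ n - Q (n α - n + 1)`, a strictly convex function on `[0, ∞)` with
`g (1 - 1/n) = (1 - 1/n) ^ n > 0`, `g 1 = 1 - Q < 0` and `g (Q n + 1) > 0`. The intermediate value
theorem gives a root on each side of `1`, and strict convexity together with `g 1 < 0` allows at
most one root on each side.
-/

open Set

section StrictConvex

variable {s : Set ℝ} {f : ℝ → ℝ} {m x y : ℝ}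

theorem StrictConvexOn.eq_of_apply_eq_of_lt_left (hf : StrictConvexOn ℝ s f) (hm : m ∈ s)
    (hx : x ∈ s) (hy : y ∈ s) (hxm : x < m) (hym : y < m) (hfm : f m < f x)
    (hfxy : f x = f y) : x = y := by
  wlog hxy : x < y generalizing x y
  · rcases (not_lt.1 hxy).lt_or_eq with hyx | rfl
    · exact (this hy hx hym hxm (hfxy ▸ hfm) hfxy.symm hyx).symm
    · rfl
  have := hf.lt_on_openSegment hx hm hxm.ne (by rw [openSegment_eq_Ioo hxm]; exact ⟨hxy, hym⟩)
  rw [max_eq_left hfm.le] at this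
  exact absurd hfxy this.ne'

theorem StrictConvexOn.eq_of_apply_eq_of_lt_right (hf : StrictConvexOn ℝ s f) (hm : m ∈ s)
    (hx : x ∈ s) (hy : y ∈ s) (hmx : m < x) (hmy : m < y) (hfm : f m < f x)
    (hfxy : f x = f y) : x = y := by
  wlog hxy : x < y generalizing x y
  · rcases (not_lt.1 hxy).lt_or_eq with hyx | rfl
    · exact (this hy hx hmy hmx (hfxy ▸ hfm) hfxy.symm hyx).symm
    · rfl
  have := hf.lt_on_openSegment hm hy (hmx.trans hxy).ne
    (by rw [openSegment_eq_Ioo (hmx.trans hxy)]; exact ⟨hmx, hxy⟩)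
  rw [max_eq_right (hfxy ▸ hfm).le] at this
  exact absurd hfxy this.ne

end StrictConvex

def levelPoly (n : ℕ) (Q α : ℝ) : ℝ := α ^ n - Q * (n * α - n + 1)

namespace levelPoly

variable {n : ℕ} {Q α : ℝ}

theorem continuous (n : ℕ) (Q : ℝ) : Continuous (levelPoly n Q) := by
  unfold levelPoly; fun_prop

theorem strictConvexOn (hn : 2 ≤ n) (Q : ℝ) : StrictConvexOn ℝ (Ici 0) (levelPoly n Q) := by
  have haffine : ConcaveOn ℝ (Ici 0) fun α : ℝ => Q * (n * α - n + 1) :=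
    ⟨convex_Ici 0, fun x _ y _ a b _ _ hab => le_of_eq <| by
      simp only [smul_eq_mul]; linear_combination (-(Q * (n - 1))) * hab⟩
  exact (strictConvexOn_pow hn).sub_concaveOn haffine

theorem apply_one : levelPoly n Q 1 = 1 - Q := by
  simp [levelPoly]

theorem apply_one_sub_inv (hn0 : n ≠ 0) : levelPoly n Q (1 - 1 / n) = (1 - 1 / n) ^ n := by
  have : (n : ℝ) ≠ 0 := by exact_mod_cast hn0
  simp only [levelPoly]; field_simp; ring

theorem apply_mul_natCast_add_one_pos (hn : 2 ≤ n) (hQ : 0 ≤ Q) :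
    0 < levelPoly n Q (Q * n + 1) := by
  have hn' : (2 : ℝ) ≤ n := by exact_mod_cast hn
  have hb : 1 ≤ Q * n + 1 := by nlinarith
  have hpow : (Q * n + 1) ^ 2 ≤ (Q * n + 1) ^ n := pow_le_pow_right₀ hb hn
  have hlin : Q * (n * (Q * n + 1) - n + 1) = (Q * n + 1) ^ 2 - (Q * n + 1) - Q * (n - 1) := by
    ring
  rw [levelPoly, hlin]
  nlinarith

theorem eq_zero_iff (hn0 : n ≠ 0) (hα : 1 - 1 / n < α) :
    levelPoly n Q α = 0 ↔ Q = α ^ n / (n * α - n + 1) := by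
  have hn' : (0 : ℝ) < n := by positivity
  have hden : 0 < n * α - n + 1 := by
    have := mul_lt_mul_of_pos_left hα hn'
    rw [mul_sub, mul_one_div_cancel hn'.ne'] at this
    linarith
  rw [eq_div_iff hden.ne', levelPoly, sub_eq_zero, eq_comm]

theorem existsUnique_zero_Ioo (hn : 2 ≤ n) (hQ : 1 < Q) :
    ∃! α ∈ Ioo (1 - 1 / (n : ℝ)) 1, levelPoly n Q α = 0 := by
  have hn0 : n ≠ 0 := by omega
  have hinv : 1 / (n : ℝ) < 1 := by
    rw [div_lt_one (by positivity)]; exact_mod_cast (by omega : 1 < n)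
  have hinv_pos : 0 < 1 / (n : ℝ) := by positivity
  obtain ⟨α, hα, hzero⟩ : (0 : ℝ) ∈ levelPoly n Q '' Ioo (1 - 1 / n) 1 := by
    refine intermediate_value_Ioo' (by linarith) (continuous n Q).continuousOn ⟨?_, ?_⟩
    · rw [apply_one]; linarith
    · rw [apply_one_sub_inv hn0]; exact pow_pos (by linarith) n
  refine ⟨α, ⟨hα, hzero⟩, fun β ⟨hβ, hβzero⟩ => ?_⟩
  have hnonneg : ∀ γ ∈ Ioo (1 - 1 / (n : ℝ)) 1, γ ∈ Ici 0 := fun γ hγ => by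
    simp only [mem_Ici]; linarith [hγ.1]
  refine (strictConvexOn hn Q).eq_of_apply_eq_of_lt_left (m := 1) (by simp)
    (hnonneg β hβ) (hnonneg α hα) hβ.2 hα.2 ?_ (hβzero.trans hzero.symm)
  rw [apply_one, hβzero]; linarith

theorem existsUnique_zero_one_lt (hn : 2 ≤ n) (hQ : 1 < Q) :
    ∃! α, 1 < α ∧ levelPoly n Q α = 0 := by
  have hb : 1 < Q * n + 1 := by
    have : (2 : ℝ) ≤ n := by exact_mod_cast hn
    nlinarith
  obtain ⟨α, hα, hzero⟩ : (0 : ℝ) ∈ levelPoly n Q '' Ioo 1 (Q * n + 1) := by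
    refine intermediate_value_Ioo hb.le (continuous n Q).continuousOn ⟨?_, ?_⟩
    · rw [apply_one]; linarith
    · exact apply_mul_natCast_add_one_pos hn (by linarith)
  refine ⟨α, ⟨hα.1, hzero⟩, fun β ⟨hβ, hβzero⟩ => ?_⟩
  refine (strictConvexOn hn Q).eq_of_apply_eq_of_lt_right (m := 1) (by simp)
    (by simp only [mem_Ici]; linarith) (by simp only [mem_Ici]; linarith [hα.1])
    hβ hα.1 ?_ (hβzero.trans hzero.symm)
  rw [apply_one, hβzero]; linarith

end levelPoly

theorem exactly_two_exponents (n : ℕ) (hn : 2 ≤ n) (Q : ℝ) (hQ : 1 < Q) :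
    (∃! α' : ℝ, α' ∈ Ioo (1 - 1 / (n : ℝ)) 1 ∧ Q = α' ^ n / (n * α' - n + 1)) ∧
    (∃! α : ℝ, 1 < α ∧ Q = α ^ n / (n * α - n + 1)) := by
  have hn0 : n ≠ 0 := by omega
  have hinv : 1 - 1 / (n : ℝ) < 1 := by simp only [sub_lt_self_iff]; positivity
  constructor
  · refine (existsUnique_congr fun α => and_congr_right fun hα => ?_).1
      (levelPoly.existsUnique_zero_Ioo hn hQ)
    exact levelPoly.eq_zero_iff hn0 hα.1
  · refine (existsUnique_congr fun α => and_congr_right fun hα => ?_).1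
      (levelPoly.existsUnique_zero_one_lt hn hQ)
    exact levelPoly.eq_zero_iff hn0 (hinv.trans hα)
end

section
/- Let n ≥ 2, α > 1 - 1/n, and S > 1. Define k(S) = Q_{α,n} · ((S^{nα-n+1} - 1)/(S - 1)) · ((S - 1)/(S^α - 1))^n with Q_{α,n} = α^n/(nα-n+1). Then k(S) ≤ Q_{α,n} for all S > 1 and k(S) → Q_{α,n} as S → ∞. -/
open Real Filter Asymptotics

/-! With `β = nα - n + 1 > 0` we have `α = β/n + (1 - 1/n)`, so `S^α` is the weighted geometric
mean of `S^β` and `S`. Superadditivity of that geometric mean, applied to `(S^β - 1, S - 1) + (1, 1)`,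
gives `(S^β - 1)(S - 1)^(n-1) ≤ (S^α - 1)^n`, i.e. `k(S) ≤ Q_{α,n}`. For the limit, each `S^γ - 1` is
asymptotically `S^γ`, and the leading terms cancel exactly because `β + (n - 1) = nα`. -/

theorem Real.geom_mean2_weighted_superadditive {w₁ w₂ x₁ x₂ y₁ y₂ : ℝ} (hw₁ : 0 ≤ w₁)
    (hw₂ : 0 ≤ w₂) (hw : w₁ + w₂ = 1) (hx₁ : 0 ≤ x₁) (hx₂ : 0 ≤ x₂) (hy₁ : 0 < y₁)
    (hy₂ : 0 < y₂) :
    x₁ ^ w₁ * x₂ ^ w₂ + y₁ ^ w₁ * y₂ ^ w₂ ≤ (x₁ + y₁) ^ w₁ * (x₂ + y₂) ^ w₂ := by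
  have hs₁ : 0 < x₁ + y₁ := by linarith
  have hs₂ : 0 < x₂ + y₂ := by linarith
  have hx := geom_mean_le_arith_mean2_weighted hw₁ hw₂ (div_nonneg hx₁ hs₁.le)
    (div_nonneg hx₂ hs₂.le) hw
  have hy := geom_mean_le_arith_mean2_weighted hw₁ hw₂ (div_nonneg hy₁.le hs₁.le)
    (div_nonneg hy₂.le hs₂.le) hw
  have hsum : w₁ * (x₁ / (x₁ + y₁)) + w₂ * (x₂ / (x₂ + y₂))
      + (w₁ * (y₁ / (x₁ + y₁)) + w₂ * (y₂ / (x₂ + y₂))) = 1 := by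
    field_simp
    linear_combination (x₁ + y₁) * (x₂ + y₂) * hw
  rw [div_rpow hx₁ hs₁.le, div_rpow hx₂ hs₂.le, div_mul_div_comm] at hx
  rw [div_rpow hy₁.le hs₁.le, div_rpow hy₂.le hs₂.le, div_mul_div_comm] at hy
  have hpos : 0 < (x₁ + y₁) ^ w₁ * (x₂ + y₂) ^ w₂ := by positivity
  rw [← div_le_one hpos, add_div]
  linarith

theorem rpow_sub_one_mul_pow_le_pow {n : ℕ} (hn : 0 < n) {α β S : ℝ} (hS : 1 ≤ S)
    (hβ : 0 ≤ β) (hαβ : n * α = β + (n - 1)) :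
    (S ^ β - 1) * (S - 1) ^ (n - 1) ≤ (S ^ α - 1) ^ n := by
  have hn' : (0 : ℝ) < n := by exact_mod_cast hn
  have hSβ : 1 ≤ S ^ β := one_le_rpow hS hβ
  have hG := geom_mean2_weighted_superadditive (w₁ := 1 / n) (w₂ := 1 - 1 / n)
    (by positivity) (by rw [sub_nonneg, div_le_one hn']; exact_mod_cast hn) (by ring)
    (sub_nonneg.2 hSβ) (sub_nonneg.2 hS) one_pos one_pos
  have hα : S ^ α = (S ^ β) ^ (1 / n : ℝ) * S ^ (1 - 1 / n : ℝ) := by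
    rw [← rpow_mul (by linarith), ← rpow_add (by linarith)]
    congr 1
    field_simp
    linarith
  simp only [one_rpow, mul_one, sub_add_cancel] at hG
  rw [← hα] at hG
  have hpow : ((S ^ β - 1) ^ (1 / n : ℝ) * (S - 1) ^ (1 - 1 / n : ℝ)) ^ n
      = (S ^ β - 1) * (S - 1) ^ (n - 1) := by
    rw [mul_pow, one_div, rpow_inv_natCast_pow (sub_nonneg.2 hSβ) hn.ne', ← rpow_mul_natCast
      (sub_nonneg.2 hS), ← rpow_natCast, Nat.cast_sub hn, Nat.cast_one]
    congr 2
    field_simp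
  rw [← hpow]
  exact pow_le_pow_left₀ (by positivity) (by linarith) n

theorem rpow_sub_one_div_mul_div_pow_le_one {n : ℕ} (hn : 0 < n) {α β S : ℝ} (hS : 1 < S)
    (hβ : 0 ≤ β) (hαβ : n * α = β + (n - 1)) :
    (S ^ β - 1) / (S - 1) * ((S - 1) / (S ^ α - 1)) ^ n ≤ 1 := by
  have hα : 0 ≤ α := by
    have : (1 : ℝ) ≤ n := by exact_mod_cast hn
    nlinarith
  have hSα : 0 ≤ S ^ α - 1 := sub_nonneg.2 (one_le_rpow hS.le hα)
  rw [div_pow, div_mul_div_comm]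
  apply div_le_one_of_le₀ _ (by positivity)
  rw [← Nat.sub_add_cancel hn, pow_succ, ← mul_assoc, mul_comm (S - 1), Nat.sub_add_cancel hn]
  exact mul_le_mul_of_nonneg_right (rpow_sub_one_mul_pow_le_pow hn hS.le hβ hαβ) (by linarith)

theorem isEquivalent_rpow_sub_one_atTop {γ : ℝ} (hγ : 0 < γ) :
    (fun S : ℝ => S ^ γ - 1) ~[atTop] fun S => S ^ γ :=
  IsEquivalent.refl.sub_isLittleO <| isLittleO_const_left.2 <| Or.inr <|
    tendsto_norm_atTop_atTop.comp (tendsto_rpow_atTop hγ)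

theorem tendsto_rpow_sub_one_div_mul_div_pow {n : ℕ} {α β : ℝ} (hα : 0 < α) (hβ : 0 < β)
    (hαβ : n * α = β + (n - 1)) :
    Tendsto (fun S : ℝ => (S ^ β - 1) / (S - 1) * ((S - 1) / (S ^ α - 1)) ^ n) atTop (nhds 1) := by
  have h₁ : (fun S : ℝ => S - 1) ~[atTop] fun S => S := by
    simpa only [rpow_one] using isEquivalent_rpow_sub_one_atTop one_pos
  have hequiv := ((isEquivalent_rpow_sub_one_atTop hβ).div h₁).mul
    ((h₁.div (isEquivalent_rpow_sub_one_atTop hα)).pow n)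
  refine hequiv.symm.tendsto_nhds (tendsto_const_nhds.congr' ?_)
  filter_upwards [eventually_gt_atTop 0] with S hS
  have hexp : S ^ β * S ^ n = S * (S ^ α) ^ n := by
    rw [← rpow_natCast, ← rpow_add hS, ← rpow_mul_natCast hS.le, ← rpow_one_add' hS.le]
    · congr 1; linarith
    · linarith
  have : 0 < S ^ α := rpow_pos_of_pos hS α
  simp only [Pi.mul_apply, Pi.div_apply, Pi.pow_apply, div_pow]
  field_simp
  linarith

theorem energy_quotient_bounded_and_limit (n : ℕ) (hn : 2 ≤ n)
    (α : ℝ) (hα : 1 - 1 / (n : ℝ) < α)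
    (k : ℝ → ℝ)
    (hk : k = fun S : ℝ => α ^ n / (n * α - n + 1)
        * ((S ^ (n * α - n + 1) - 1) / (S - 1)) * ((S - 1) / (S ^ α - 1)) ^ n) :
    (∀ S : ℝ, 1 < S → k S ≤ α ^ n / (n * α - n + 1)) ∧
    Tendsto k atTop (nhds (α ^ n / (n * α - n + 1))) := by
  have hn₀ : 0 < n := by omega
  have hn' : (2 : ℝ) ≤ n := by exact_mod_cast hn
  set β : ℝ := n * α - n + 1
  have hβ : 0 < β := by
    have := (mul_lt_mul_iff_right₀ (by linarith : (0 : ℝ) < n)).2 hα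
    rw [mul_sub, mul_one, mul_one_div_cancel (by linarith)] at this
    linarith
  have hα₀ : 0 < α := by nlinarith
  have hαβ : n * α = β + (n - 1) := by ring
  set Q := α ^ n / β
  have hk' : k = fun S => Q * ((S ^ β - 1) / (S - 1) * ((S - 1) / (S ^ α - 1)) ^ n) := by
    simp only [hk, mul_assoc]
  have hQ : 0 < Q := by positivity
  refine ⟨fun S hS => ?_, ?_⟩
  · rw [hk']
    exact mul_le_of_le_one_right hQ.le
      (rpow_sub_one_div_mul_div_pow_le_one hn₀ hS hβ.le hαβ)
  · rw [hk']
    simpa only [mul_one] using (tendsto_rpow_sub_one_div_mul_div_pow hα₀ hβ hαβ).const_mul Q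
end

section
/- Let n ≥ 2, α > 1 - 1/n, and define k(S) = Q_{α,n} ((S^{nα-n+1}-1)/(S-1))((S-1)/(S^α-1))^n for S > 1, where Q_{α,n} = α^n/(nα-n+1). Then k(S) ≥ k(√S) for every S > 1. -/
/-!
Write `β = nα - n + 1` and `T = √S`. Since `S - 1 = (T - 1)(T + 1)` and likewise for `S^β` and
`S^α`, the quotient factors as `k(S) = k(T) · (1 + T^β)(1 + T)^(n-1) / (1 + T^α)^n`.
The exponents satisfy `nα = β + (n - 1)`, i.e. `T^α` is the weighted geometric mean of `T^β` and
`T` with weights `1/n` and `1 - 1/n`, so Hölder's inequality for two-term sums,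
`(1 + c)^n ≤ (1 + a)(1 + b)^(n-1)` whenever `c^n = a b^(n-1)`, shows that this factor is `≥ 1`.
-/

open Real

theorem one_add_rpow_mul_rpow_le {u v w : ℝ} (hu : 0 ≤ u) (hv : 0 ≤ v) (hw₀ : 0 ≤ w)
    (hw₁ : w ≤ 1) : 1 + u ^ w * v ^ (1 - w) ≤ (1 + u) ^ w * (1 + v) ^ (1 - w) := by
  have hA : 0 < 1 + u := by linarith
  have hB : 0 < 1 + v := by linarith
  have hw₁' : 0 ≤ 1 - w := sub_nonneg.2 hw₁
  have hinv := geom_mean_le_arith_mean2_weighted hw₀ hw₁' (inv_nonneg.2 hA.le)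
    (inv_nonneg.2 hB.le) (add_sub_cancel w 1)
  have hdiv := geom_mean_le_arith_mean2_weighted hw₀ hw₁' (div_nonneg hu hA.le)
    (div_nonneg hv hB.le) (add_sub_cancel w 1)
  rw [inv_rpow hA.le, inv_rpow hB.le] at hinv
  rw [div_rpow hu hA.le, div_rpow hv hB.le] at hdiv
  have hAw : 0 < (1 + u) ^ w := rpow_pos_of_pos hA w
  have hBw : 0 < (1 + v) ^ (1 - w) := rpow_pos_of_pos hB (1 - w)
  calc 1 + u ^ w * v ^ (1 - w)
      = (1 + u) ^ w * (1 + v) ^ (1 - w) * (((1 + u) ^ w)⁻¹ * ((1 + v) ^ (1 - w))⁻¹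
          + u ^ w / (1 + u) ^ w * (v ^ (1 - w) / (1 + v) ^ (1 - w))) := by
        field_simp
    _ ≤ (1 + u) ^ w * (1 + v) ^ (1 - w) * (w * (1 + u)⁻¹ + (1 - w) * (1 + v)⁻¹
          + (w * (u / (1 + u)) + (1 - w) * (v / (1 + v)))) := by
        gcongr
    _ = (1 + u) ^ w * (1 + v) ^ (1 - w) := by
        field_simp
        ring

theorem one_add_pow_le_of_pow_eq {n : ℕ} (hn : n ≠ 0) {a b c : ℝ} (ha : 0 ≤ a) (hb : 0 ≤ b)
    (hc : 0 ≤ c) (habc : c ^ n = a * b ^ (n - 1)) :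
    (1 + c) ^ n ≤ (1 + a) * (1 + b) ^ (n - 1) := by
  have hn₁ : 1 ≤ n := Nat.one_le_iff_ne_zero.2 hn
  have hw₁ : (n⁻¹ : ℝ) ≤ 1 := inv_le_one_of_one_le₀ (Nat.one_le_cast.2 hn₁)
  have hroot : ∀ x : ℝ, 0 ≤ x → (x ^ (n - 1)) ^ (n⁻¹ : ℝ) = x ^ (1 - (n⁻¹ : ℝ)) := by
    intro x hx
    rw [← rpow_natCast, ← rpow_mul hx, Nat.cast_sub hn₁, Nat.cast_one]
    congr 1
    field_simp
  have hc' : c = a ^ (n⁻¹ : ℝ) * b ^ (1 - (n⁻¹ : ℝ)) := by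
    rw [← pow_rpow_inv_natCast hc hn, habc, mul_rpow ha (by positivity), hroot b hb]
  calc (1 + c) ^ n ≤ ((1 + a) ^ (n⁻¹ : ℝ) * (1 + b) ^ (1 - (n⁻¹ : ℝ))) ^ n := by
        gcongr
        exact hc' ▸ one_add_rpow_mul_rpow_le ha hb (by positivity) hw₁
    _ = (((1 + a) * (1 + b) ^ (n - 1)) ^ (n⁻¹ : ℝ)) ^ n := by
        rw [mul_rpow (by positivity) (by positivity), hroot (1 + b) (by positivity)]
    _ = (1 + a) * (1 + b) ^ (n - 1) := rpow_inv_natCast_pow (by positivity) hn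

noncomputable def energyQuotient (n : ℕ) (α S : ℝ) : ℝ :=
  α ^ n / (n * α - n + 1) * ((S ^ (n * α - n + 1) - 1) / (S - 1)) * ((S - 1) / (S ^ α - 1)) ^ n

theorem energyQuotient_pos {n : ℕ} {α S : ℝ} (hα : 0 < α) (hβ : 0 < n * α - n + 1)
    (hS : 1 < S) : 0 < energyQuotient n α S := by
  have hS₁ : 0 < S - 1 := sub_pos.2 hS
  have hSα : 0 < S ^ α - 1 := sub_pos.2 (one_lt_rpow hS hα)
  have hSβ : 0 < S ^ (n * α - n + 1) - 1 := sub_pos.2 (one_lt_rpow hS hβ)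
  unfold energyQuotient
  positivity

theorem energyQuotient_sq {n : ℕ} (hn : n ≠ 0) {α T : ℝ} (hα : α ≠ 0) (hT : 1 < T) :
    energyQuotient n α (T ^ 2) = energyQuotient n α T
      * ((1 + T ^ (n * α - n + 1)) * (1 + T) ^ (n - 1) / (1 + T ^ α) ^ n) := by
  have hT₀ : 0 ≤ T := by linarith
  have hT₁ : T - 1 ≠ 0 := sub_ne_zero.2 hT.ne'
  have hc₁ : T ^ α - 1 ≠ 0 := sub_ne_zero.2 <| by
    rcases hα.lt_or_gt with hα | hα
    exacts [(rpow_lt_one_of_one_lt_of_neg hT hα).ne, (one_lt_rpow hT hα).ne']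
  have hc₀ : 0 ≤ T ^ α := rpow_nonneg hT₀ _
  unfold energyQuotient
  rw [← rpow_pow_comm hT₀, ← rpow_pow_comm hT₀]
  generalize T ^ ((n : ℝ) * α - n + 1) = a at *
  generalize T ^ α = c at *
  obtain ⟨m, rfl⟩ : ∃ m, n = m + 1 := ⟨n - 1, by omega⟩
  rw [Nat.add_sub_cancel, show a ^ 2 - 1 = (a - 1) * (1 + a) by ring,
    show T ^ 2 - 1 = (T - 1) * (1 + T) by ring, show c ^ 2 - 1 = (c - 1) * (1 + c) by ring]
  have : 1 + T ≠ 0 := by positivity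
  have : 1 + c ≠ 0 := by positivity
  simp only [div_pow, mul_pow]
  field_simp
  ring

theorem energy_quotient_sqrt_ineq (n : ℕ) (hn : 2 ≤ n)
    (α : ℝ) (hα : 1 - 1 / (n : ℝ) < α)
    (k : ℝ → ℝ)
    (hk : k = fun S : ℝ => α ^ n / (n * α - n + 1)
        * ((S ^ (n * α - n + 1) - 1) / (S - 1)) * ((S - 1) / (S ^ α - 1)) ^ n)
    (S : ℝ) (hS : 1 < S) :
    k (Real.sqrt S) ≤ k S := by
  obtain rfl : k = energyQuotient n α := hk
  have hn₀ : n ≠ 0 := by omega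
  have hnR : (0 : ℝ) < n := by positivity
  have hβ : 0 < n * α - n + 1 := by
    rw [one_sub_div hnR.ne', div_lt_iff₀ hnR] at hα
    linarith
  have hα₀ : 0 < α := by
    have : 1 / (n : ℝ) ≤ 1 := div_le_one_of_le₀ (Nat.one_le_cast.2 hn₀.bot_lt) hnR.le
    linarith
  obtain ⟨T, hT, rfl⟩ : ∃ T, 1 < T ∧ S = T ^ 2 :=
    ⟨√S, lt_sqrt_of_sq_lt (by linarith), (sq_sqrt (by linarith)).symm⟩
  have hT₀ : 0 ≤ T := by linarith
  have hpow : (T ^ α) ^ n = T ^ (n * α - n + 1) * T ^ (n - 1) := by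
    rw [← rpow_natCast, ← rpow_mul hT₀, ← rpow_natCast T (n - 1), ← rpow_add (by linarith),
      Nat.cast_sub (by omega)]
    ring_nf
  rw [sqrt_sq hT₀, energyQuotient_sq hn₀ hα₀.ne' hT]
  refine le_mul_of_one_le_right (energyQuotient_pos hα₀ hβ hT).le ?_
  rw [one_le_div (by positivity)]
  exact one_add_pow_le_of_pow_eq hn₀ (by positivity) hT₀ (by positivity) hpow
end

section
/- Let 1 - 1/n < α₂ < 1 < α₁. Then there is a unique r₀ ∈ (1/e, 1) satisfying 1 = (-log r₀)^{α₂} + (log(e r₀))^{α₁}. -/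
open Real Set Filter Topology

/-!
Put `t = -log r`; then the equation reads `f t = 1` on `(0, 1)` with `f t = t ^ α₂ + (1 - t) ^ α₁`,
and `f 0 = f 1 = 1`. Bernoulli's inequality gives `f > 1` near `0` and `f < 1` near `1`, so the
intermediate value theorem yields a solution. Two solutions would give, together with the
endpoints, three zeros of `f'` by Rolle's theorem. But `f' t = 0` means
`(α₂ - 1) log t - (α₁ - 1) log (1 - t) = log α₁ - log α₂`, and the left side is strictly convex,
so it cannot take the same value three times.
-/

theorem StrictConvexOn.apply_lt_of_apply_eq {s : Set ℝ} {f : ℝ → ℝ} (hf : StrictConvexOn ℝ s f)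
    {x y z : ℝ} (hx : x ∈ s) (hz : z ∈ s) (hxy : x < y) (hyz : y < z) (heq : f x = f y) :
    f y < f z := by
  have := hf.slope_strict_mono_adjacent hx hz hxy hyz
  rw [heq, sub_self, zero_div, div_pos_iff_of_pos_right (sub_pos.2 hyz)] at this
  linarith

theorem exists_three_hasDerivAt_eq_zero {f f' : ℝ → ℝ} {a x y b : ℝ}
    (hax : a < x) (hxy : x < y) (hyb : y < b) (hf : ContinuousOn f (Icc a b))
    (hf' : ∀ t ∈ Ioo a b, HasDerivAt f (f' t) t) (hx : f x = f a) (hy : f y = f a)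
    (hb : f b = f a) :
    ∃ c₁ c₂ c₃, a < c₁ ∧ c₁ < c₂ ∧ c₂ < c₃ ∧ c₃ < b ∧ f' c₁ = 0 ∧ f' c₂ = 0 ∧ f' c₃ = 0 := by
  have rolle : ∀ u v, a ≤ u → u < v → v ≤ b → f u = f v → ∃ c ∈ Ioo u v, f' c = 0 :=
    fun u v hau huv hvb hfuv => exists_hasDerivAt_eq_zero huv
      (hf.mono (Icc_subset_Icc hau hvb)) hfuv
      fun t ht => hf' t ⟨hau.trans_lt ht.1, ht.2.trans_le hvb⟩
  obtain ⟨c₁, hc₁, h₁⟩ := rolle a x le_rfl hax (hxy.trans hyb).le hx.symm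
  obtain ⟨c₂, hc₂, h₂⟩ := rolle x y hax.le hxy hyb.le (hx.trans hy.symm)
  obtain ⟨c₃, hc₃, h₃⟩ := rolle y b (hax.trans hxy).le hyb le_rfl (hy.trans hb.symm)
  exact ⟨c₁, c₂, c₃, hc₁.1, hc₁.2.trans hc₂.1, hc₂.2.trans hc₃.1, hc₃.2, h₁, h₂, h₃⟩

theorem eventually_mul_lt_rpow {p : ℝ} (hp : p < 1) (c : ℝ) :
    ∀ᶠ s in 𝓝[>] (0 : ℝ), c * s < s ^ p := by
  filter_upwards [(tendsto_rpow_neg_nhdsGT_zero (sub_neg.2 hp)).eventually_gt_atTop c,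
    self_mem_nhdsWithin] with s hcs (hs : 0 < s)
  rw [rpow_sub_one hs.ne', lt_div_iff₀ hs] at hcs
  exact hcs

theorem eventually_rpow_lt_mul {q : ℝ} (hq : 1 < q) {c : ℝ} (hc : 0 < c) :
    ∀ᶠ s in 𝓝[>] (0 : ℝ), s ^ q < c * s := by
  have hlim : Tendsto (fun s : ℝ => s ^ (q - 1)) (𝓝[>] 0) (𝓝 0) := by
    simpa [zero_rpow (sub_pos.2 hq).ne'] using
      ((continuous_rpow_const (sub_pos.2 hq).le).tendsto 0).mono_left nhdsWithin_le_nhds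
  filter_upwards [hlim.eventually_lt_const hc, self_mem_nhdsWithin] with s hcs (hs : 0 < s)
  rw [rpow_sub_one hs.ne', div_lt_iff₀ hs] at hcs
  exact hcs

section

variable {a b : ℝ}

theorem continuous_rpow_add_one_sub_rpow (ha : 0 ≤ a) (hb : 0 ≤ b) :
    Continuous fun t : ℝ => t ^ a + (1 - t) ^ b :=
  (continuous_rpow_const ha).add ((continuous_rpow_const hb).comp (continuous_sub_left 1))

theorem hasDerivAt_rpow_add_one_sub_rpow {t : ℝ} (ht : t ∈ Ioo (0 : ℝ) 1) :
    HasDerivAt (fun t => t ^ a + (1 - t) ^ b) (a * t ^ (a - 1) - b * (1 - t) ^ (b - 1)) t := by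
  have hsub : HasDerivAt (fun t : ℝ => 1 - t) (-1) t := by
    simpa using (hasDerivAt_id t).const_sub 1
  exact ((hasDerivAt_rpow_const (Or.inl ht.1.ne')).add
    (hsub.rpow_const (Or.inl (sub_pos.2 ht.2).ne'))).congr_deriv (by ring)

theorem strictConvexOn_mul_log_sub_mul_log_one_sub (ha : a < 1) (hb : 1 < b) :
    StrictConvexOn ℝ (Ioo 0 1) fun t => (a - 1) * log t - (b - 1) * log (1 - t) := by
  have hderiv : ∀ t ∈ Ioo (0 : ℝ) 1, HasDerivAt (fun t => (a - 1) * log t - (b - 1) * log (1 - t))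
      ((a - 1) / t + (b - 1) / (1 - t)) t := by
    intro t ht
    have hsub : HasDerivAt (fun t : ℝ => 1 - t) (-1) t := by
      simpa using (hasDerivAt_id t).const_sub 1
    exact (((hasDerivAt_log ht.1.ne').const_mul (a - 1)).sub
      ((hsub.log (sub_pos.2 ht.2).ne').const_mul (b - 1))).congr_deriv (by field_simp; ring)
  refine StrictMonoOn.strictConvexOn_of_deriv (convex_Ioo 0 1)
    (fun t ht => (hderiv t ht).continuousAt.continuousWithinAt) ?_
  rw [interior_Ioo]
  intro s hs t ht hst
  rw [(hderiv s hs).deriv, (hderiv t ht).deriv]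
  have h₁ : (1 - a) / t < (1 - a) / s := div_lt_div_of_pos_left (sub_pos.2 ha) hs.1 hst
  have h₂ : (b - 1) / (1 - s) < (b - 1) / (1 - t) :=
    div_lt_div_of_pos_left (sub_pos.2 hb) (sub_pos.2 ht.2) (by linarith)
  rw [← neg_sub 1 a, neg_div, neg_div]
  linarith

theorem mul_log_sub_mul_log_one_sub_eq_of_eq (ha : 0 < a) (hb : 0 < b) {t : ℝ}
    (ht : t ∈ Ioo (0 : ℝ) 1) (h : a * t ^ (a - 1) = b * (1 - t) ^ (b - 1)) :
    (a - 1) * log t - (b - 1) * log (1 - t) = log b - log a := by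
  have h1t : 0 < 1 - t := sub_pos.2 ht.2
  have := congrArg log h
  rw [log_mul ha.ne' (rpow_pos_of_pos ht.1 _).ne', log_mul hb.ne' (rpow_pos_of_pos h1t _).ne',
    log_rpow ht.1, log_rpow h1t] at this
  linarith

theorem exists_rpow_add_one_sub_rpow_eq_one (ha₀ : 0 < a) (ha₁ : a < 1) (hb : 1 < b) :
    ∃ t ∈ Ioo (0 : ℝ) 1, t ^ a + (1 - t) ^ b = 1 := by
  obtain ⟨t, hbt, ht⟩ := ((eventually_mul_lt_rpow ha₁ b).and (Ioo_mem_nhdsGT one_pos)).exists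
  obtain ⟨u, hua, hu⟩ := ((eventually_rpow_lt_mul hb ha₀).and (Ioo_mem_nhdsGT one_pos)).exists
  have hgt : 1 < t ^ a + (1 - t) ^ b := by
    have := one_add_mul_self_le_rpow_one_add (s := -t) (by linarith [ht.2]) hb.le
    rw [← sub_eq_add_neg] at this
    linarith
  have hlt : (1 - u) ^ a + (1 - (1 - u)) ^ b < 1 := by
    have := rpow_one_add_le_one_add_mul_self (s := -u) (by linarith [hu.2]) ha₀.le ha₁.le
    rw [← sub_eq_add_neg] at this
    rw [sub_sub_cancel]
    linarith
  obtain ⟨c, hc, hc_eq⟩ := intermediate_value_uIcc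
    (continuous_rpow_add_one_sub_rpow ha₀.le (zero_le_one.trans hb.le)).continuousOn
    (mem_uIcc.2 (Or.inr ⟨hlt.le, hgt.le⟩))
  exact ⟨c, ordConnected_Ioo.uIcc_subset ht ⟨by linarith [hu.2], by linarith [hu.1]⟩ hc, hc_eq⟩

theorem eq_of_rpow_add_one_sub_rpow_eq_one (ha₀ : 0 < a) (ha₁ : a < 1) (hb : 1 < b) {x y : ℝ}
    (hx : x ∈ Ioo (0 : ℝ) 1) (hy : y ∈ Ioo (0 : ℝ) 1) (hx_eq : x ^ a + (1 - x) ^ b = 1)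
    (hy_eq : y ^ a + (1 - y) ^ b = 1) : x = y := by
  wlog hxy : x < y generalizing x y
  · rcases (not_lt.1 hxy).lt_or_eq with hyx | hyx
    · exact (this hy hx hy_eq hx_eq hyx).symm
    · exact hyx.symm
  have h₀ : (0 : ℝ) ^ a + (1 - 0) ^ b = 1 := by simp [zero_rpow ha₀.ne']
  have h₁ : (1 : ℝ) ^ a + (1 - 1) ^ b = 1 := by simp [zero_rpow (ha₀.trans (ha₁.trans hb)).ne']
  obtain ⟨c₁, c₂, c₃, hc₁, hc₁₂, hc₂₃, hc₃, hd₁, hd₂, hd₃⟩ := exists_three_hasDerivAt_eq_zero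
    hx.1 hxy hy.2 (continuous_rpow_add_one_sub_rpow ha₀.le (zero_le_one.trans hb.le)).continuousOn
    (fun t ht => hasDerivAt_rpow_add_one_sub_rpow ht) (hx_eq.trans h₀.symm)
    (hy_eq.trans h₀.symm) (h₁.trans h₀.symm)
  have mem₁ : c₁ ∈ Ioo (0 : ℝ) 1 := ⟨hc₁, by linarith⟩
  have mem₂ : c₂ ∈ Ioo (0 : ℝ) 1 := ⟨by linarith, by linarith⟩
  have mem₃ : c₃ ∈ Ioo (0 : ℝ) 1 := ⟨by linarith, hc₃⟩
  have hφ : ∀ c ∈ Ioo (0 : ℝ) 1, a * c ^ (a - 1) - b * (1 - c) ^ (b - 1) = 0 →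
      (a - 1) * log c - (b - 1) * log (1 - c) = log b - log a := fun c hc hd =>
    mul_log_sub_mul_log_one_sub_eq_of_eq ha₀ (zero_lt_one.trans hb) hc (sub_eq_zero.1 hd)
  have := (strictConvexOn_mul_log_sub_mul_log_one_sub ha₁ hb).apply_lt_of_apply_eq mem₁ mem₃
    hc₁₂ hc₂₃ ((hφ c₁ mem₁ hd₁).trans (hφ c₂ mem₂ hd₂).symm)
  exact absurd ((hφ c₂ mem₂ hd₂).trans (hφ c₃ mem₃ hd₃).symm) this.ne

theorem existsUnique_rpow_add_one_sub_rpow_eq_one (ha₀ : 0 < a) (ha₁ : a < 1) (hb : 1 < b) :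
    ∃! t, t ∈ Ioo (0 : ℝ) 1 ∧ t ^ a + (1 - t) ^ b = 1 := by
  obtain ⟨t, ht, ht_eq⟩ := exists_rpow_add_one_sub_rpow_eq_one ha₀ ha₁ hb
  exact ⟨t, ⟨ht, ht_eq⟩, fun s ⟨hs, hs_eq⟩ =>
    eq_of_rpow_add_one_sub_rpow_eq_one ha₀ ha₁ hb hs ht hs_eq ht_eq⟩

end

theorem log_exp_one_mul {r : ℝ} (hr : 0 < r) : log (exp 1 * r) = 1 - -log r := by
  rw [log_mul (exp_pos 1).ne' hr.ne', log_exp]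
  ring

theorem unique_r0_general (n : ℕ) (α₁ α₂ : ℝ)
    (hα₂ : 1 - 1 / (n : ℝ) < α₂) (hα₂1 : α₂ < 1) (hα₁ : 1 < α₁) :
    ∃! r : ℝ, r ∈ Ioo (1 / Real.exp 1) 1 ∧
      1 = (-Real.log r) ^ α₂ + Real.log (Real.exp 1 * r) ^ α₁ := by
  have hα₂0 : 0 < α₂ := by
    have : 1 / (n : ℝ) ≤ 1 := by simpa only [one_div] using Nat.cast_inv_le_one n
    linarith
  obtain ⟨t, ⟨ht, ht_eq⟩, huniq⟩ := existsUnique_rpow_add_one_sub_rpow_eq_one hα₂0 hα₂1 hα₁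
  rw [one_div, ← exp_neg]
  refine ⟨exp (-t),
    ⟨⟨exp_lt_exp.2 (by linarith [ht.2]), exp_lt_one_iff.2 (by linarith [ht.1])⟩, ?_⟩,
    fun r ⟨hr, hr_eq⟩ => ?_⟩
  · rw [log_exp_one_mul (exp_pos _), log_exp, neg_neg, ht_eq]
  have hr₀ : 0 < r := (exp_pos _).trans hr.1
  have hlog : -log r ∈ Ioo (0 : ℝ) 1 :=
    ⟨neg_pos.2 (log_neg hr₀ hr.2), by linarith [(lt_log_iff_exp_lt hr₀).2 hr.1]⟩
  have : -log r = t := huniq _ ⟨hlog, by rw [log_exp_one_mul hr₀] at hr_eq; exact hr_eq.symm⟩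
  rw [← exp_log hr₀, ← this, neg_neg]

theorem unique_r0 (n : ℕ) (hn : 2 ≤ n) (α₁ α₂ : ℝ)
    (hα₂ : 1 - 1 / (n : ℝ) < α₂) (hα₂1 : α₂ < 1) (hα₁ : 1 < α₁) :
    ∃! r : ℝ, r ∈ Ioo (1 / Real.exp 1) 1 ∧
      1 = (-Real.log r) ^ α₂ + Real.log (Real.exp 1 * r) ^ α₁ :=
  unique_r0_general n α₁ α₂ hα₂ hα₂1 hα₁
end

section
/- For every α₁ > 1 and 0 < α₂ < 1, the equation (1 - x)^{α₂} + x^{α₁} = 1 has exactly one solution x ∈ (0, 1). -/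
open Set Filter Topology Real

/-!
Let `F x = (1 - x) ^ p + x ^ q` with `0 < p < 1 < q`, so that `F 0 = F 1 = 1`. Bernoulli's
inequality shows `F < 1` just right of `0` (where `x ^ q` is negligible against `p x`) and `F > 1`
just left of `1` (where `(1 - x) ^ p` dominates `q (1 - x)`), so a root in `(0, 1)` exists by the
intermediate value theorem. Two roots would give, together with the endpoints, three critical
points of `F` by Rolle. At a critical point `q t ^ (q - 1) = p (1 - t) ^ (p - 1)`; taking
logarithms, all three lie on one level set of the strictly concave function
`(q - 1) log t + (1 - p) log (1 - t)`, which is impossible.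
-/

theorem StrictConcaveOn.lt_of_eq_of_lt_of_lt {𝕜 β : Type*} [Field 𝕜] [LinearOrder 𝕜]
    [IsStrictOrderedRing 𝕜] [AddCommMonoid β] [LinearOrder β] [IsOrderedAddMonoid β] [Module 𝕜 β]
    [PosSMulStrictMono 𝕜 β]
    {s : Set 𝕜} {f : 𝕜 → β} (hf : StrictConcaveOn 𝕜 s f) {x y z : 𝕜} (hx : x ∈ s) (hz : z ∈ s)
    (hxy : x < y) (hyz : y < z) (hfxz : f x = f z) :
    f x < f y := by
  have := hf.lt_on_openSegment hx hz (hxy.trans hyz).ne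
    (by rw [openSegment_eq_Ioo (hxy.trans hyz)]; exact ⟨hxy, hyz⟩)
  rwa [← hfxz, min_self] at this

theorem strictConcaveOn_mul_log_add_mul_log_one_sub {c d : ℝ} (hc : 0 < c) (hd : 0 < d) :
    StrictConcaveOn ℝ (Ioo 0 1) fun t ↦ c * log t + d * log (1 - t) := by
  refine ⟨convex_Ioo 0 1, fun x hx y hy hxy a b ha hb hab ↦ ?_⟩
  have hlog := strictConcaveOn_log_Ioi.2 hx.1 hy.1 hxy ha hb hab
  have hlog_one_sub := strictConcaveOn_log_Ioi.2 (sub_pos.2 hx.2) (sub_pos.2 hy.2)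
    (sub_right_injective.ne hxy) ha hb hab
  have hsub : 1 - (a • x + b • y) = a • (1 - x) + b • (1 - y) := by
    simp only [smul_eq_mul]; linear_combination (-1 : ℝ) * hab
  simp only [smul_eq_mul] at hlog hlog_one_sub hsub ⊢
  rw [hsub]
  linarith [mul_lt_mul_of_pos_left hlog hc, mul_lt_mul_of_pos_left hlog_one_sub hd]

theorem eventually_rpow_lt {r c : ℝ} (hr : 0 < r) (hc : 0 < c) : ∀ᶠ x in 𝓝[>] 0, x ^ r < c := by
  have h := continuousAt_rpow_const 0 r (Or.inr hr.le)
  rw [ContinuousAt, zero_rpow hr.ne'] at h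
  exact nhdsWithin_le_nhds (h.eventually (gt_mem_nhds hc))

noncomputable def powSum (p q x : ℝ) : ℝ := (1 - x) ^ p + x ^ q

section powSum

variable {p q : ℝ}

theorem powSum_zero (hq : q ≠ 0) : powSum p q 0 = 1 := by
  simp [powSum, zero_rpow hq]

theorem powSum_one (hp : p ≠ 0) : powSum p q 1 = 1 := by
  simp [powSum, zero_rpow hp]

theorem continuous_powSum (hp : 0 ≤ p) (hq : 0 ≤ q) : Continuous (powSum p q) :=
  ((continuous_const.sub continuous_id).rpow_const fun _ ↦ Or.inr hp).add
    (continuous_id.rpow_const fun _ ↦ Or.inr hq)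

theorem hasDerivAt_powSum {t : ℝ} (ht : t ∈ Ioo 0 1) :
    HasDerivAt (powSum p q) (q * t ^ (q - 1) - p * (1 - t) ^ (p - 1)) t := by
  have h := (((hasDerivAt_id t).const_sub 1).rpow_const (p := p)
    (Or.inl (sub_pos.2 ht.2).ne')).add (hasDerivAt_rpow_const (p := q) (Or.inl ht.1.ne'))
  exact h.congr_deriv (by simp only [id]; ring)

theorem log_eq_of_critical (hp : 0 < p) (hq : 0 < q) {t : ℝ} (ht : t ∈ Ioo 0 1)
    (hcrit : q * t ^ (q - 1) - p * (1 - t) ^ (p - 1) = 0) :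
    (q - 1) * log t + (1 - p) * log (1 - t) = log p - log q := by
  have ht' : 0 < 1 - t := sub_pos.2 ht.2
  have h := congrArg log (sub_eq_zero.1 hcrit)
  rw [log_mul hq.ne' (rpow_pos_of_pos ht.1 _).ne', log_mul hp.ne' (rpow_pos_of_pos ht' _).ne',
    log_rpow ht.1, log_rpow ht'] at h
  linarith

theorem exists_mem_Ioo_log_eq_of_powSum_eq (hp : 0 < p) (hq : 0 < q) {x y : ℝ} (hx : 0 ≤ x)
    (hxy : x < y) (hy : y ≤ 1) (hfxy : powSum p q x = powSum p q y) :
    ∃ t ∈ Ioo x y, (q - 1) * log t + (1 - p) * log (1 - t) = log p - log q := by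
  have hsub : Ioo x y ⊆ Ioo 0 1 := Ioo_subset_Ioo hx hy
  obtain ⟨t, ht, hcrit⟩ := exists_hasDerivAt_eq_zero hxy
    (continuous_powSum hp.le hq.le).continuousOn hfxy fun t ht ↦ hasDerivAt_powSum (hsub ht)
  exact ⟨t, ht, log_eq_of_critical hp hq (hsub ht) hcrit⟩

theorem eq_of_powSum_eq_one (hp₀ : 0 < p) (hp₁ : p < 1) (hq : 1 < q) {x y : ℝ}
    (hx : x ∈ Ioo 0 1) (hy : y ∈ Ioo 0 1) (hfx : powSum p q x = 1) (hfy : powSum p q y = 1) :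
    x = y := by
  wlog hxy : x < y generalizing x y
  · rcases (not_lt.1 hxy).lt_or_eq with h | h
    · exact (this hy hx hfy hfx h).symm
    · exact h.symm
  have hq₀ : 0 < q := zero_lt_one.trans hq
  obtain ⟨t₁, ht₁, hψ₁⟩ := exists_mem_Ioo_log_eq_of_powSum_eq hp₀ hq₀ le_rfl hx.1 hx.2.le
    (by rw [powSum_zero hq₀.ne', hfx])
  obtain ⟨t₂, ht₂, hψ₂⟩ := exists_mem_Ioo_log_eq_of_powSum_eq hp₀ hq₀ hx.1.le hxy hy.2.le
    (by rw [hfx, hfy])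
  obtain ⟨t₃, ht₃, hψ₃⟩ := exists_mem_Ioo_log_eq_of_powSum_eq hp₀ hq₀ hy.1.le hy.2 le_rfl
    (by rw [hfy, powSum_one hp₀.ne'])
  have hψ := strictConcaveOn_mul_log_add_mul_log_one_sub (sub_pos.2 hq) (sub_pos.2 hp₁)
  have hψ₁₂ := hψ.lt_of_eq_of_lt_of_lt ⟨ht₁.1, ht₁.2.trans hx.2⟩ ⟨hy.1.trans ht₃.1, ht₃.2⟩
    (ht₁.2.trans ht₂.1) (ht₂.2.trans ht₃.1) (hψ₁.trans hψ₃.symm)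
  exact absurd (hψ₁.trans hψ₂.symm) hψ₁₂.ne

theorem eventually_powSum_lt_one (hp₀ : 0 < p) (hp₁ : p ≤ 1) (hq : 1 < q) :
    ∀ᶠ x in 𝓝[>] 0, powSum p q x < 1 := by
  filter_upwards [eventually_rpow_lt (sub_pos.2 hq) hp₀, Ioo_mem_nhdsGT one_pos] with x hx hx₁
  have hbernoulli : (1 - x) ^ p ≤ 1 - p * x := by
    simpa [← sub_eq_add_neg] using
      rpow_one_add_le_one_add_mul_self (s := -x) (by linarith [hx₁.2]) hp₀.le hp₁
  have hsmall : x ^ q < p * x := by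
    rw [← sub_add_cancel q 1, rpow_add_one hx₁.1.ne']
    exact mul_lt_mul_of_pos_right hx hx₁.1
  rw [powSum]; linarith

theorem eventually_one_lt_powSum_one_sub (hp : p < 1) (hq : 1 ≤ q) :
    ∀ᶠ s in 𝓝[>] 0, 1 < powSum p q (1 - s) := by
  have hq₀ : 0 < q := zero_lt_one.trans_le hq
  filter_upwards [eventually_rpow_lt (sub_pos.2 hp) (inv_pos.2 hq₀),
    Ioo_mem_nhdsGT one_pos] with s hs hs₁
  have hbernoulli : 1 - q * s ≤ (1 - s) ^ q := by
    simpa [← sub_eq_add_neg] using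
      one_add_mul_self_le_rpow_one_add (s := -s) (by linarith [hs₁.2]) hq
  have hlarge : q * s < s ^ p :=
    calc q * s = q * s ^ (1 - p) * s ^ p := by
          rw [mul_assoc, ← rpow_add hs₁.1, sub_add_cancel, rpow_one]
      _ < 1 * s ^ p := mul_lt_mul_of_pos_right
          (by simpa [hq₀.ne'] using mul_lt_mul_of_pos_left hs hq₀) (rpow_pos_of_pos hs₁.1 p)
      _ = s ^ p := one_mul _
  rw [powSum, sub_sub_cancel]; linarith

theorem exists_powSum_eq_one (hp₀ : 0 < p) (hp₁ : p < 1) (hq : 1 < q) :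
    ∃ x ∈ Ioo 0 1, powSum p q x = 1 := by
  have hhalf : Ioo (0 : ℝ) (1 / 2) ∈ 𝓝[>] 0 := Ioo_mem_nhdsGT (by norm_num)
  obtain ⟨a, hfa, ha⟩ := ((eventually_powSum_lt_one hp₀ hp₁.le hq).and hhalf).exists
  obtain ⟨s, hfs, hs⟩ := ((eventually_one_lt_powSum_one_sub hp₁ hq.le).and hhalf).exists
  obtain ⟨x, hx, hfx⟩ := intermediate_value_Ioo (by linarith [ha.2, hs.2] : a ≤ 1 - s)
    (continuous_powSum hp₀.le (zero_le_one.trans hq.le)).continuousOn ⟨hfa, hfs⟩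
  exact ⟨x, ⟨ha.1.trans hx.1, hx.2.trans (by linarith [hs.1])⟩, hfx⟩

end powSum

theorem unique_x0 (α₁ α₂ : ℝ) (hα₁ : 1 < α₁) (hα₂0 : 0 < α₂) (hα₂ : α₂ < 1) :
    ∃! x : ℝ, x ∈ Ioo (0 : ℝ) 1 ∧ (1 - x) ^ α₂ + x ^ α₁ = 1 := by
  obtain ⟨x, hx, hfx⟩ := exists_powSum_eq_one hα₂0 hα₂ hα₁
  exact ⟨x, ⟨hx, hfx⟩, fun y ⟨hy, hfy⟩ ↦ eq_of_powSum_eq_one hα₂0 hα₂ hα₁ hy hx hfy hfx⟩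
end

section
/- Let n ≥ 2, 1 - 1/n < α₂ < 1 < α₁, u₁(x) = (log(e|x|))^{α₁} and u₂(x) = 1 - (-log|x|)^{α₂} on A = {x ∈ ℝⁿ : 1/e < |x| < 1}, and let r₀ ∈ (1/e, 1) be the unique solution of 1 = (-log r₀)^{α₂} + (log(e r₀))^{α₁}. Then the n-energy of u = min{u₁, u₂} over A equals c_{n-1}·( Q_{α₁,n}(log(e r₀))^{n(α₁-1)+1} + Q_{α₂,n}(-log r₀)^{n(α₂-1)+1} ), where Q_{α,n} = α^n/(nα-n+1) and c_{n-1} is the surface measure of S^{n-1}. -/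
/-!
In logarithmic polar coordinates `t = log ‖x‖` the competitors are `u₁ = (1 + t) ^ α₁` and
`u₂ = 1 - (-t) ^ α₂` for `t ∈ (-1, 0)`. In dimension `n` the `n`-energy is conformally invariant:
for `u x = k (log ‖x‖)` one has `‖∇u x‖ = |k' t| / ‖x‖`, and the polar factor `r ^ (n - 1) dr`
turns `|k' t| ^ n / r ^ n` into `|k' t| ^ n dt`, so the energy on the annulus is
`n |B₁| ∫₋₁⁰ |k'| ^ n`.

The difference `1 - (-t) ^ α₂ - (1 + t) ^ α₁` vanishes at `-1`, `t₀ = log r₀` and `0`, and after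
taking logarithms its derivative is nonpositive exactly on a superlevel set of a concave function,
that is, on an interval. This forces the difference to be nonnegative before `t₀` and nonpositive
after it, so `min u₁ u₂` is `u₁` on `(-1, t₀)` and `u₂` on `(t₀, 0)`, and the energy splits into two
power integrals.
-/

open Real Set MeasureTheory Filter Topology Metric Module

theorem norm_gradient_comp_norm {E : Type*} [NormedAddCommGroup E] [InnerProductSpace ℝ E]
    [CompleteSpace E] (g : ℝ → ℝ) {x : E} (hx : x ≠ 0) :
    ‖gradient (fun y => g ‖y‖) x‖ = |deriv g ‖x‖| := by
  have hnorm : DifferentiableAt ℝ (‖·‖) x :=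
    (contDiffAt_norm ℝ hx (n := 1)).differentiableAt one_ne_zero
  have : Nontrivial E := ⟨⟨x, 0, hx⟩⟩
  by_cases hg : DifferentiableAt ℝ g ‖x‖
  · have hd : HasFDerivAt (fun y => g ‖y‖) (deriv g ‖x‖ • fderiv ℝ (‖·‖) x) x :=
      hg.hasDerivAt.comp_hasFDerivAt x hnorm.hasFDerivAt
    rw [gradient, LinearIsometryEquiv.norm_map, hd.fderiv, norm_smul,
      norm_fderiv_norm hnorm, mul_one, Real.norm_eq_abs]
  · -- along the ray through `x`, the radial function is `g` itself
    have hray : ¬DifferentiableAt ℝ (fun y => g ‖y‖) x := by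
      intro hF
      have hx' : ‖x‖ • ‖x‖⁻¹ • x = x := smul_inv_smul₀ (norm_ne_zero_iff.2 hx) x
      refine hg (DifferentiableAt.congr_of_eventuallyEq
        (f := (fun y => g ‖y‖) ∘ fun t : ℝ => t • ‖x‖⁻¹ • x) ?_ ?_)
      · exact (hx' ▸ hF).comp ‖x‖ (differentiableAt_id.smul_const (‖x‖⁻¹ • x))
      · filter_upwards [Ioi_mem_nhds (norm_pos_iff.2 hx)] with t (ht : 0 < t)
        simp [norm_smul, abs_of_pos ht, hx]
    rw [gradient_eq_zero_of_not_differentiableAt hray, deriv_zero_of_not_differentiableAt hg,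
      norm_zero, abs_zero]

theorem deriv_comp_log (h : ℝ → ℝ) {r : ℝ} (hr : 0 < r) :
    deriv (fun t => h (log t)) r = deriv h (log r) / r := by
  by_cases hh : DifferentiableAt ℝ h (log r)
  · have hd : HasDerivAt (fun t => h (log t)) (deriv h (log r) * r⁻¹) r :=
      hh.hasDerivAt.comp r (hasDerivAt_log hr.ne')
    rw [hd.deriv, div_eq_mul_inv]
  · -- `h = (h ∘ log) ∘ exp`, so `h ∘ log` cannot be differentiable at `r` either
    have hcomp : ¬DifferentiableAt ℝ (fun t => h (log t)) r := by
      intro hF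
      refine hh ?_
      have := (exp_log hr ▸ hF).comp (log r) differentiableAt_exp
      simpa [Function.comp_def] using this
    rw [deriv_zero_of_not_differentiableAt hh, deriv_zero_of_not_differentiableAt hcomp, zero_div]

theorem setIntegral_Ioo_exp_comp_log_div (F : ℝ → ℝ) (a b : ℝ) :
    ∫ r in Ioo (exp a) (exp b), F (log r) / r = ∫ s in Ioo a b, F s := by
  rw [← image_exp_Ioo, integral_image_eq_integral_abs_deriv_smul measurableSet_Ioo
    (fun s _ => (hasDerivAt_exp s).hasDerivWithinAt) exp_injective.injOn]
  refine setIntegral_congr_fun measurableSet_Ioo fun s _ => ?_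
  simp [abs_of_pos (exp_pos s), mul_div_cancel₀ _ (exp_pos s).ne']

section Shell

variable {E F : Type*} [NormedAddCommGroup E] [NormedSpace ℝ E] [Nontrivial E]
  [FiniteDimensional ℝ E] [MeasurableSpace E] [BorelSpace E] (μ : Measure E) [μ.IsAddHaarMeasure]
  [NormedAddCommGroup F] [NormedSpace ℝ F]

theorem setIntegral_shell_fun_norm (f : ℝ → F) {a b : ℝ} (ha : 0 ≤ a) :
    ∫ x in {x : E | a < ‖x‖ ∧ ‖x‖ < b}, f ‖x‖ ∂μ
      = finrank ℝ E • μ.real (ball 0 1) • ∫ r in Ioo a b, r ^ (finrank ℝ E - 1) • f r := by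
  have hshell : {x : E | a < ‖x‖ ∧ ‖x‖ < b} = (‖·‖) ⁻¹' Ioo a b := rfl
  rw [hshell, ← integral_indicator (measurableSet_Ioo.preimage continuous_norm.measurable)]
  have hind : (fun r : ℝ => r ^ (finrank ℝ E - 1) • (Ioo a b).indicator f r)
      = (Ioo a b).indicator fun r => r ^ (finrank ℝ E - 1) • f r := by
    ext r; by_cases hr : r ∈ Ioo a b <;> simp [hr]
  have hpolar := integral_fun_norm_addHaar μ ((Ioo a b).indicator f)
  rw [hind, setIntegral_indicator measurableSet_Ioo,
    inter_eq_right.2 (Ioo_subset_Ioi_self.trans (Ioi_subset_Ioi ha))] at hpolar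
  exact hpolar

end Shell

section Energy

variable {E : Type*} [NormedAddCommGroup E] [InnerProductSpace ℝ E] [Nontrivial E]
  [FiniteDimensional ℝ E] [MeasurableSpace E] [BorelSpace E] (μ : Measure E) [μ.IsAddHaarMeasure]

theorem setIntegral_shell_norm_gradient_pow_of_eq_comp_log_norm {u : E → ℝ} (h : ℝ → ℝ)
    (hu : ∀ y, y ≠ 0 → u y = h (log ‖y‖)) (a b : ℝ) :
    ∫ x in {x : E | exp a < ‖x‖ ∧ ‖x‖ < exp b}, ‖gradient u x‖ ^ finrank ℝ E ∂μ
      = finrank ℝ E * μ.real (ball 0 1) * ∫ s in Ioo a b, |deriv h s| ^ finrank ℝ E := by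
  set d := finrank ℝ E
  calc _ = ∫ x in {x : E | exp a < ‖x‖ ∧ ‖x‖ < exp b}, (|deriv h (log ‖x‖)| / ‖x‖) ^ d ∂μ := by
        refine setIntegral_congr_fun (measurableSet_Ioo.preimage continuous_norm.measurable)
          fun x hx => ?_
        have hx0 : 0 < ‖x‖ := (exp_pos a).trans hx.1
        have hux : u =ᶠ[𝓝 x] fun y => h (log ‖y‖) := by
          filter_upwards [isOpen_ne.mem_nhds (norm_pos_iff.1 hx0)] with y hy using hu y hy
        rw [hux.gradient_eq, norm_gradient_comp_norm (fun r => h (log r)) (norm_pos_iff.1 hx0),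
          deriv_comp_log h hx0, abs_div, abs_of_pos hx0]
    _ = d * μ.real (ball 0 1) *
          ∫ r in Ioo (exp a) (exp b), r ^ (d - 1) * (|deriv h (log r)| / r) ^ d := by
        rw [setIntegral_shell_fun_norm μ (fun r => (|deriv h (log r)| / r) ^ d) (exp_pos a).le]
        simp only [nsmul_eq_mul, smul_eq_mul, mul_assoc, d]
    _ = d * μ.real (ball 0 1) * ∫ r in Ioo (exp a) (exp b), |deriv h (log r)| ^ d / r := by
        congr 1
        refine setIntegral_congr_fun measurableSet_Ioo fun r hr => ?_
        have hr0 : r ≠ 0 := ((exp_pos a).trans hr.1).ne'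
        rw [div_pow, ← pow_sub_one_mul finrank_pos.ne' r]
        field_simp
        exact mul_comm _ _
    _ = _ := by rw [setIntegral_Ioo_exp_comp_log_div (fun s => |deriv h s| ^ d) a b]

end Energy

section SignPattern

variable {f f' : ℝ → ℝ} {a b : ℝ}

theorem strictMonoOn_Icc_left_or_right_of_ordConnected (hf : ContinuousOn f (Icc a b))
    (hf' : ∀ x ∈ Ioo a b, HasDerivAt f (f' x) x) (hS : OrdConnected {x ∈ Ioo a b | f' x ≤ 0})
    {q : ℝ} (hq : q ∈ Ioo a b) (hfq : 0 < f' q) :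
    StrictMonoOn f (Icc a q) ∨ StrictMonoOn f (Icc q b) := by
  have hmono : ∀ {c d}, a ≤ c → d ≤ b → (∀ x ∈ Ioo c d, 0 < f' x) → StrictMonoOn f (Icc c d) := by
    intro c d hac hdb hpos
    refine strictMonoOn_of_deriv_pos (convex_Icc c d) (hf.mono (Icc_subset_Icc hac hdb))
      fun x hx => ?_
    rw [interior_Icc] at hx
    rw [(hf' x ⟨hac.trans_lt hx.1, hx.2.trans_le hdb⟩).deriv]
    exact hpos x hx
  by_cases hleft : ∀ x ∈ Ioo a q, 0 < f' x
  · exact Or.inl (hmono le_rfl hq.2.le hleft)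
  · push Not at hleft
    obtain ⟨p, hp, hfp⟩ := hleft
    refine Or.inr (hmono hq.1.le le_rfl fun x hx => ?_)
    by_contra! hfx
    -- otherwise `q` would lie between two points of the ord-connected set `{f' ≤ 0}`
    have hqS := hS.out ⟨⟨hp.1, hp.2.trans hq.2⟩, hfp⟩ ⟨⟨hq.1.trans hx.1, hx.2⟩, hfx⟩
      ⟨hp.2.le, hx.1.le⟩
    exact hqS.2.not_gt hfq

theorem nonneg_Ioo_and_nonpos_Ioo_of_ordConnected (hf : ContinuousOn f (Icc a b))
    (hf' : ∀ x ∈ Ioo a b, HasDerivAt f (f' x) x) (hS : OrdConnected {x ∈ Ioo a b | f' x ≤ 0})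
    {c : ℝ} (hc : c ∈ Ioo a b) (hfa : f a = 0) (hfc : f c = 0) (hfb : f b = 0) :
    (∀ x ∈ Ioo a c, 0 ≤ f x) ∧ ∀ x ∈ Ioo c b, f x ≤ 0 := by
  constructor
  · intro x hx
    by_contra! hfx
    obtain ⟨q, hq, hfq⟩ := exists_hasDerivAt_eq_slope f f' hx.2
      (hf.mono (Icc_subset_Icc hx.1.le hc.2.le))
      fun y hy => hf' y ⟨hx.1.trans hy.1, hy.2.trans hc.2⟩
    have hfq' : 0 < f' q := by rw [hfq, hfc]; exact div_pos (by linarith) (by linarith [hx.2])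
    rcases strictMonoOn_Icc_left_or_right_of_ordConnected hf hf' hS
      ⟨hx.1.trans hq.1, hq.2.trans hc.2⟩ hfq' with hmono | hmono
    · linarith [hmono ⟨le_rfl, hx.1.le.trans hq.1.le⟩ ⟨hx.1.le, hq.1.le⟩ hx.1]
    · linarith [hmono ⟨hq.2.le, hc.2.le⟩ ⟨hq.2.le.trans hc.2.le, le_rfl⟩ hc.2]
  · intro x hx
    by_contra! hfx
    obtain ⟨q, hq, hfq⟩ := exists_hasDerivAt_eq_slope f f' hx.1
      (hf.mono (Icc_subset_Icc hc.1.le hx.2.le))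
      fun y hy => hf' y ⟨hc.1.trans hy.1, hy.2.trans hx.2⟩
    have hfq' : 0 < f' q := by rw [hfq, hfc]; exact div_pos (by linarith) (by linarith [hx.1])
    rcases strictMonoOn_Icc_left_or_right_of_ordConnected hf hf' hS
      ⟨hc.1.trans hq.1, hq.2.trans hx.2⟩ hfq' with hmono | hmono
    · linarith [hmono ⟨le_rfl, hc.1.le.trans hq.1.le⟩ ⟨hc.1.le, hq.1.le⟩ hc.1]
    · linarith [hmono ⟨hq.2.le, hx.2.le⟩ ⟨hq.2.le.trans hx.2.le, le_rfl⟩ hx.2]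

end SignPattern

section Profile

variable {α₁ α₂ : ℝ}

theorem concaveOn_mul_log_one_add_add_mul_log_neg (hα₂ : α₂ ≤ 1) (hα₁ : 1 ≤ α₁) :
    ConcaveOn ℝ (Ioo (-1) 0) fun t => (α₁ - 1) * log (1 + t) + (1 - α₂) * log (-t) := by
  have hlog₁ : ConcaveOn ℝ (Ioo (-1) 0) fun t => log (1 + t) :=
    (strictConcaveOn_log_Ioi.concaveOn.translate_right 1).subset
      (fun t ht => show 0 < 1 + t by linarith [ht.1]) (convex_Ioo _ _)
  have hlog₂ : ConcaveOn ℝ (Ioo (-1) 0) fun t => log (-t) :=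
    (strictConcaveOn_log_Iio.concaveOn.subset Ioo_subset_Iio_self (convex_Ioo _ _)).congr
      fun t _ => (log_neg_eq_log t).symm
  exact (hlog₁.smul (by linarith)).add (hlog₂.smul (by linarith))

theorem ordConnected_setOf_deriv_nonpos (hα₂0 : 0 < α₂) (hα₂ : α₂ ≤ 1) (hα₁ : 1 ≤ α₁) :
    OrdConnected {t ∈ Ioo (-1 : ℝ) 0 | α₂ * (-t) ^ (α₂ - 1) - α₁ * (1 + t) ^ (α₁ - 1) ≤ 0} := by
  have hset : {t ∈ Ioo (-1 : ℝ) 0 | α₂ * (-t) ^ (α₂ - 1) - α₁ * (1 + t) ^ (α₁ - 1) ≤ 0}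
      = {t ∈ Ioo (-1 : ℝ) 0 | log α₂ - log α₁ ≤ (α₁ - 1) * log (1 + t) + (1 - α₂) * log (-t)} := by
    ext t
    refine and_congr_right fun ht => ?_
    have ht₁ : 0 < 1 + t := by linarith [ht.1]
    have ht₂ : 0 < -t := by linarith [ht.2]
    have hα₁0 : 0 < α₁ := by linarith
    rw [sub_nonpos, ← log_le_log_iff (mul_pos hα₂0 (rpow_pos_of_pos ht₂ _))
      (mul_pos hα₁0 (rpow_pos_of_pos ht₁ _)), log_mul hα₂0.ne' (rpow_pos_of_pos ht₂ _).ne',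
      log_mul hα₁0.ne' (rpow_pos_of_pos ht₁ _).ne', log_rpow ht₂, log_rpow ht₁]
    constructor <;> intro h <;> linarith
  rw [hset]
  exact ((concaveOn_mul_log_one_add_add_mul_log_neg hα₂ hα₁).convex_ge _).ordConnected

theorem one_add_rpow_le_one_sub_neg_rpow_and_ge (hα₂0 : 0 < α₂) (hα₂ : α₂ ≤ 1) (hα₁ : 1 ≤ α₁)
    {t₀ : ℝ} (ht₀ : t₀ ∈ Ioo (-1) 0) (h : 1 = (-t₀) ^ α₂ + (1 + t₀) ^ α₁) :
    (∀ t ∈ Ioo (-1) t₀, (1 + t) ^ α₁ ≤ 1 - (-t) ^ α₂) ∧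
      ∀ t ∈ Ioo t₀ 0, 1 - (-t) ^ α₂ ≤ (1 + t) ^ α₁ := by
  have hα₁0 : 0 < α₁ := by linarith
  have hcont : ContinuousOn (fun t : ℝ => 1 - (-t) ^ α₂ - (1 + t) ^ α₁) (Icc (-1) 0) :=
    ((continuousOn_const.sub (continuousOn_neg.rpow_const fun _ _ => Or.inr hα₂0.le)).sub
      ((continuousOn_const.add continuousOn_id).rpow_const fun _ _ => Or.inr hα₁0.le))
  have hderiv : ∀ t ∈ Ioo (-1 : ℝ) 0, HasDerivAt (fun t : ℝ => 1 - (-t) ^ α₂ - (1 + t) ^ α₁)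
      (α₂ * (-t) ^ (α₂ - 1) - α₁ * (1 + t) ^ (α₁ - 1)) t := by
    intro t ht
    have ht₁ : 1 + t ≠ 0 := by linarith [ht.1]
    have ht₂ : -t ≠ 0 := by linarith [ht.2]
    refine (((hasDerivAt_rpow_const (Or.inl ht₂)).comp t (hasDerivAt_neg t)).const_sub 1 |>.sub
      ((hasDerivAt_rpow_const (Or.inl ht₁)).comp_const_add 1 t)).congr_deriv ?_
    ring
  obtain ⟨hleft, hright⟩ := nonneg_Ioo_and_nonpos_Ioo_of_ordConnected hcont hderiv
    (ordConnected_setOf_deriv_nonpos hα₂0 hα₂ hα₁) ht₀ (by simp [zero_rpow hα₁0.ne'])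
    (by linarith) (by simp [zero_rpow hα₂0.ne'])
  exact ⟨fun t ht => by linarith [hleft t ht], fun t ht => by linarith [hright t ht]⟩

theorem hasDerivAt_rpow_antideriv (n : ℕ) {α x : ℝ} (hx : 0 < x)
    (hβ : (n : ℝ) * (α - 1) + 1 ≠ 0) :
    HasDerivAt (fun y => α ^ n / (n * (α - 1) + 1) * y ^ ((n : ℝ) * (α - 1) + 1))
      ((α * x ^ (α - 1)) ^ n) x := by
  refine ((hasDerivAt_rpow_const (p := (n : ℝ) * (α - 1) + 1) (Or.inl hx.ne')).const_mul
    (α ^ n / (n * (α - 1) + 1))).congr_deriv ?_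
  rw [mul_pow, ← rpow_natCast (x ^ (α - 1)), ← rpow_mul hx.le, add_sub_cancel_right,
    mul_comm (α - 1)]
  field_simp

theorem setIntegral_abs_deriv_min_rpow_pow (n : ℕ) {t₀ : ℝ} (ht₀ : t₀ ∈ Ioo (-1) 0)
    (hα₁ : 0 ≤ α₁) (hα₂ : 0 ≤ α₂) (hβ₁ : 0 < (n : ℝ) * (α₁ - 1) + 1)
    (hβ₂ : 0 < (n : ℝ) * (α₂ - 1) + 1)
    (hleft : ∀ t ∈ Ioo (-1) t₀, (1 + t) ^ α₁ ≤ 1 - (-t) ^ α₂)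
    (hright : ∀ t ∈ Ioo t₀ 0, 1 - (-t) ^ α₂ ≤ (1 + t) ^ α₁) :
    ∫ t in Ioo (-1) 0, |deriv (fun t => min ((1 + t) ^ α₁) (1 - (-t) ^ α₂)) t| ^ n
      = α₁ ^ n / (n * (α₁ - 1) + 1) * (1 + t₀) ^ ((n : ℝ) * (α₁ - 1) + 1)
        + α₂ ^ n / (n * (α₂ - 1) + 1) * (-t₀) ^ ((n : ℝ) * (α₂ - 1) + 1) := by
  set k := fun t : ℝ => min ((1 + t) ^ α₁) (1 - (-t) ^ α₂)
  set A₁ := fun y : ℝ => α₁ ^ n / (n * (α₁ - 1) + 1) * y ^ ((n : ℝ) * (α₁ - 1) + 1)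
  set A₂ := fun y : ℝ => α₂ ^ n / (n * (α₂ - 1) + 1) * y ^ ((n : ℝ) * (α₂ - 1) + 1)
  have hderiv₁ : ∀ t ∈ Ioo (-1) t₀, HasDerivAt (fun t => A₁ (1 + t)) (|deriv k t| ^ n) t := by
    intro t ht
    have hk : k =ᶠ[𝓝 t] fun t => (1 + t) ^ α₁ := by
      filter_upwards [isOpen_Ioo.mem_nhds ht] with t ht using min_eq_left (hleft t ht)
    have ht1 : 0 < 1 + t := by linarith [ht.1]
    rw [hk.deriv_eq, deriv_comp_const_add (fun y => y ^ α₁), Real.deriv_rpow_const,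
      abs_of_nonneg (by positivity)]
    exact (hasDerivAt_rpow_antideriv n ht1 hβ₁.ne').comp_const_add 1 t
  have hderiv₂ : ∀ t ∈ Ioo t₀ 0, HasDerivAt (fun t => -A₂ (-t)) (|deriv k t| ^ n) t := by
    intro t ht
    have hk : k =ᶠ[𝓝 t] fun t => 1 - (-t) ^ α₂ := by
      filter_upwards [isOpen_Ioo.mem_nhds ht] with t ht using min_eq_right (hright t ht)
    have ht0 : 0 < -t := by linarith [ht.2]
    rw [hk.deriv_eq, deriv_const_sub, deriv_comp_neg (fun y => y ^ α₂), Real.deriv_rpow_const,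
      neg_neg, abs_of_nonneg (by positivity)]
    exact ((hasDerivAt_rpow_antideriv n ht0 hβ₂.ne').comp t (hasDerivAt_neg t)).neg.congr_deriv
      (by ring)
  have hcont₁ : ContinuousOn (fun t => A₁ (1 + t)) (Icc (-1) t₀) :=
    (continuous_const.mul ((continuous_rpow_const hβ₁.le).comp
      (continuous_const.add continuous_id))).continuousOn
  have hcont₂ : ContinuousOn (fun t => -A₂ (-t)) (Icc t₀ 0) :=
    (continuous_const.mul ((continuous_rpow_const hβ₂.le).comp continuous_neg)).neg.continuousOn
  have hint₁ : IntervalIntegrable (fun t => |deriv k t| ^ n) volume (-1) t₀ :=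
    (intervalIntegrable_iff_integrableOn_Ioc_of_le ht₀.1.le).2
      (intervalIntegral.integrableOn_deriv_of_nonneg hcont₁ hderiv₁ fun t _ => by positivity)
  have hint₂ : IntervalIntegrable (fun t => |deriv k t| ^ n) volume t₀ 0 :=
    (intervalIntegrable_iff_integrableOn_Ioc_of_le ht₀.2.le).2
      (intervalIntegral.integrableOn_deriv_of_nonneg hcont₂ hderiv₂ fun t _ => by positivity)
  rw [← integral_Ioc_eq_integral_Ioo, ← intervalIntegral.integral_of_le (by norm_num),
    ← intervalIntegral.integral_add_adjacent_intervals hint₁ hint₂,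
    intervalIntegral.integral_eq_sub_of_hasDerivAt_of_le ht₀.1.le hcont₁ hderiv₁ hint₁,
    intervalIntegral.integral_eq_sub_of_hasDerivAt_of_le ht₀.2.le hcont₂ hderiv₂ hint₂]
  simp [A₁, A₂, zero_rpow hβ₁.ne', zero_rpow hβ₂.ne']

end Profile

theorem energy_of_min_on_annulus (n : ℕ) (hn : 2 ≤ n) (α₁ α₂ : ℝ)
    (hα₂ : 1 - 1 / (n : ℝ) < α₂) (hα₂1 : α₂ < 1) (hα₁ : 1 < α₁)
    (u₁ u₂ : EuclideanSpace ℝ (Fin n) → ℝ)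
    (hu₁ : u₁ = fun x => Real.log (Real.exp 1 * ‖x‖) ^ α₁)
    (hu₂ : u₂ = fun x => 1 - (-Real.log ‖x‖) ^ α₂)
    (r₀ : ℝ) (hr₀ : r₀ ∈ Ioo (1 / Real.exp 1) 1)
    (heq : 1 = (-Real.log r₀) ^ α₂ + Real.log (Real.exp 1 * r₀) ^ α₁) :
    ∫ x in {x : EuclideanSpace ℝ (Fin n) | 1 / Real.exp 1 < ‖x‖ ∧ ‖x‖ < 1},
        ‖gradient (fun y => min (u₁ y) (u₂ y)) x‖ ^ n
      = (n : ℝ) * (volume (Metric.ball (0 : EuclideanSpace ℝ (Fin n)) 1)).toReal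
        * (α₁ ^ n / (n * α₁ - n + 1) * Real.log (Real.exp 1 * r₀) ^ (n * (α₁ - 1) + 1)
          + α₂ ^ n / (n * α₂ - n + 1) * (-Real.log r₀) ^ (n * (α₂ - 1) + 1)) := by
  have : Nonempty (Fin n) := ⟨⟨0, by omega⟩⟩
  have hn1 : (1 : ℝ) ≤ n := by exact_mod_cast (by omega : 1 ≤ n)
  have hα₂0 : 0 < α₂ := by linarith [(div_le_one (by linarith : (0 : ℝ) < n)).2 hn1]
  have hβ₁ : 0 < (n : ℝ) * (α₁ - 1) + 1 := by nlinarith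
  have hβ₂ : 0 < (n : ℝ) * (α₂ - 1) + 1 := by
    have : (n : ℝ) * (1 / n) = 1 := by field_simp
    nlinarith
  have hlog_mul : ∀ {r : ℝ}, 0 < r → log (exp 1 * r) = 1 + log r := fun hr => by
    rw [log_mul (exp_pos 1).ne' hr.ne', log_exp]
  obtain ⟨hr₀e, hr₀1⟩ := hr₀
  have hr₀0 : 0 < r₀ := lt_trans (by positivity) hr₀e
  have ht₀ : log r₀ ∈ Ioo (-1) 0 :=
    ⟨by rwa [lt_log_iff_exp_lt hr₀0, exp_neg, inv_eq_one_div], log_neg hr₀0 hr₀1⟩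
  rw [hlog_mul hr₀0] at heq ⊢
  obtain ⟨hleft, hright⟩ := one_add_rpow_le_one_sub_neg_rpow_and_ge hα₂0 hα₂1.le hα₁.le ht₀ heq
  have hshell : {x : EuclideanSpace ℝ (Fin n) | 1 / exp 1 < ‖x‖ ∧ ‖x‖ < 1}
      = {x | exp (-1) < ‖x‖ ∧ ‖x‖ < exp 0} := by simp [exp_neg]
  have henergy := setIntegral_shell_norm_gradient_pow_of_eq_comp_log_norm volume
    (u := fun y : EuclideanSpace ℝ (Fin n) => min (u₁ y) (u₂ y))
    (fun t => min ((1 + t) ^ α₁) (1 - (-t) ^ α₂))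
    (fun y hy => by simp only [hu₁, hu₂, hlog_mul (norm_pos_iff.2 hy)]) (-1) 0
  rw [finrank_euclideanSpace_fin] at henergy
  rw [hshell, henergy, ← measureReal_def,
    setIntegral_abs_deriv_min_rpow_pow n ht₀ (by linarith) hα₂0.le hβ₁ hβ₂ hleft hright]
  ring_nf
end

section
/- Let n ≥ 2, 1 - 1/n < α₂ < 1 < α₁ with corresponding Q₁ = Q_{α₁,n} and Q₂ = Q_{α₂,n}, and let x₀ ∈ (0,1) solve 1 = (1-x₀)^{α₂} + x₀^{α₁}. Then the quantity Q̂ := Q₁ x₀^{n(α₁-1)+1} + Q₂ (1-x₀)^{n(α₂-1)+1} satisfies Q̂ > max{Q₁, Q₂}. -/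
/-!
Write `g₁ x = α₁ x^(α₁-1)` and `g₂ x = α₂ (1-x)^(α₂-1)`. Then `Q₁ x₀^(n(α₁-1)+1) = ∫₀^x₀ g₁ⁿ`,
`Q₂ = ∫₀¹ g₂ⁿ`, and the equation for `x₀` says `∫₀^x₀ g₁ = ∫₀^x₀ g₂` and `∫_x₀^1 g₁ = ∫_x₀^1 g₂`.
Since `x^α₁ + (1-x)^α₂` equals `1` at `0`, `x₀` and `1`, Rolle gives crossings `g₁ = g₂` at some
`c₁ < x₀ < c₂`, and as `log (g₁ / g₂)` is strictly concave, `g₂ < g₁` exactly on `(c₁, c₂)`.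
Both `g`s increase, so on `[0, x₀]` the value `g₂ x` always lies between `g₁ x` and `k = g₂ c₁`.
The function `t ↦ tⁿ - n kⁿ⁻¹ t` decreases up to `k` and increases after it, hence
`∫₀^x₀ (g₂ⁿ - n kⁿ⁻¹ g₂) < ∫₀^x₀ (g₁ⁿ - n kⁿ⁻¹ g₁)`; the linear terms cancel and this is
`Q₂ < Q̂`. The same argument on `[x₀, 1]` with `k = g₁ c₂` gives `Q₁ < Q̂`.
-/

open Set Real MeasureTheory

lemma intervalIntegral.integral_lt_integral_of_le_of_lt_on_Ioo {f g : ℝ → ℝ} {a b c d : ℝ}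
    (hfi : IntervalIntegrable f volume a b) (hgi : IntervalIntegrable g volume a b)
    (hle : ∀ x ∈ Ioo a b, f x ≤ g x) (hcd : c < d) (hsub : Ioo c d ⊆ Ioo a b)
    (hlt : ∀ x ∈ Ioo c d, f x < g x) :
    ∫ x in a..b, f x < ∫ x in a..b, g x := by
  have hab : a ≤ b := by
    obtain ⟨x, hx⟩ := nonempty_Ioo.2 hcd
    exact ((hsub hx).1.trans (hsub hx).2).le
  refine intervalIntegral.integral_lt_integral_of_ae_le_of_measure_setOfPred_lt_ne_zero hab hfi hgi
    ?_ ?_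
  · rw [Filter.EventuallyLE, ← Measure.restrict_congr_set Ioo_ae_eq_Ioc,
      ae_restrict_iff' measurableSet_Ioo]
    exact Filter.Eventually.of_forall hle
  · refine ne_of_gt (lt_of_lt_of_le ?_ (measure_mono (s := Ioo c d) fun x hx => hlt x hx))
    rw [Measure.restrict_apply measurableSet_Ioo, inter_eq_left.2 (hsub.trans Ioo_subset_Ioc_self),
      Real.volume_Ioo]
    simpa using hcd

/-- `t ^ n` corrected by its slope at `k`, so that it is minimal at `t = k` on `t ≥ 0`. -/
def powTilt (n : ℕ) (k t : ℝ) : ℝ := t ^ n - n * k ^ (n - 1) * t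

section PowTilt

variable {n : ℕ} {k : ℝ}

lemma continuous_powTilt (n : ℕ) (k : ℝ) : Continuous (powTilt n k) := by
  unfold powTilt
  fun_prop

lemma hasDerivAt_powTilt (n : ℕ) (k t : ℝ) :
    HasDerivAt (powTilt n k) (n * t ^ (n - 1) - n * k ^ (n - 1)) t := by
  have h := (hasDerivAt_pow n t).sub ((hasDerivAt_id' t).const_mul (n * k ^ (n - 1)))
  rwa [mul_one] at h

lemma strictAntiOn_powTilt (hn : 1 < n) : StrictAntiOn (powTilt n k) (Icc 0 k) := by
  refine strictAntiOn_of_deriv_neg (convex_Icc 0 k)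
    (continuous_powTilt n k).continuousOn fun t ht => ?_
  rw [interior_Icc] at ht
  rw [(hasDerivAt_powTilt n k t).deriv, sub_neg]
  exact mul_lt_mul_of_pos_left (pow_lt_pow_left₀ ht.2 ht.1.le (by omega)) (by positivity)

lemma strictMonoOn_powTilt (hn : 1 < n) (hk : 0 ≤ k) : StrictMonoOn (powTilt n k) (Ici k) := by
  refine strictMonoOn_of_deriv_pos (convex_Ici k)
    (continuous_powTilt n k).continuousOn fun t ht => ?_
  rw [interior_Ici] at ht
  rw [(hasDerivAt_powTilt n k t).deriv, sub_pos]
  exact mul_lt_mul_of_pos_left (pow_lt_pow_left₀ ht hk (by omega)) (by positivity)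

lemma powTilt_lt_of_mem_uIcc (hn : 1 < n) {u v : ℝ} (hu : 0 ≤ u) (hk : 0 ≤ k) (hv : v ∈ uIcc u k)
    (hvu : v ≠ u) : powTilt n k v < powTilt n k u := by
  rcases le_total u k with huk | hku
  · rw [uIcc_of_le huk] at hv
    exact strictAntiOn_powTilt hn ⟨hu, huk⟩ ⟨hu.trans hv.1, hv.2⟩ (lt_of_le_of_ne hv.1 hvu.symm)
  · rw [uIcc_of_ge hku] at hv
    exact strictMonoOn_powTilt hn hk hv.1 hku (lt_of_le_of_ne hv.2 hvu)

lemma powTilt_le_of_mem_uIcc (hn : 1 < n) {u v : ℝ} (hu : 0 ≤ u) (hk : 0 ≤ k) (hv : v ∈ uIcc u k) :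
    powTilt n k v ≤ powTilt n k u := by
  rcases eq_or_ne v u with rfl | hvu
  · rfl
  · exact (powTilt_lt_of_mem_uIcc hn hu hk hv hvu).le

end PowTilt

noncomputable def rpowDeriv (α x : ℝ) : ℝ := α * x ^ (α - 1)

section Integrals

variable {n : ℕ} {α a b : ℝ}

lemma rpowDeriv_pow {x : ℝ} (hx : 0 ≤ x) (n : ℕ) :
    rpowDeriv α x ^ n = α ^ n * x ^ (n * (α - 1)) := by
  rw [rpowDeriv, mul_pow, ← rpow_natCast (x ^ (α - 1)), ← rpow_mul hx, mul_comm (α - 1)]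

lemma eqOn_rpowDeriv_pow (ha : 0 ≤ a) (hb : 0 ≤ b) :
    EqOn (fun x => rpowDeriv α x ^ n) (fun x => α ^ n * x ^ (n * (α - 1))) (uIcc a b) :=
  fun _ hx => rpowDeriv_pow ((le_min ha hb).trans hx.1) n

lemma intervalIntegrable_rpowDeriv_pow (hα : -1 < n * (α - 1)) (ha : 0 ≤ a) (hb : 0 ≤ b) :
    IntervalIntegrable (fun x => rpowDeriv α x ^ n) volume a b :=
  (((intervalIntegral.intervalIntegrable_rpow' hα).const_mul (α ^ n)).congr
    ((eqOn_rpowDeriv_pow ha hb).symm.mono uIoc_subset_uIcc))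

lemma integral_rpowDeriv_pow (hα : -1 < n * (α - 1)) (ha : 0 ≤ a) (hb : 0 ≤ b) :
    ∫ x in a..b, rpowDeriv α x ^ n =
      α ^ n / (n * α - n + 1) * (b ^ (n * (α - 1) + 1) - a ^ (n * (α - 1) + 1)) := by
  rw [intervalIntegral.integral_congr (eqOn_rpowDeriv_pow ha hb),
    intervalIntegral.integral_const_mul, integral_rpow (Or.inl hα)]
  ring

lemma integral_rpowDeriv (hα : 0 < α) (ha : 0 ≤ a) (hb : 0 ≤ b) :
    ∫ x in a..b, rpowDeriv α x = b ^ α - a ^ α := by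
  have h := integral_rpowDeriv_pow (n := 1) (by simpa using hα) ha hb
  simp only [pow_one, Nat.cast_one, one_mul, sub_add_cancel] at h
  rwa [div_self hα.ne', one_mul] at h

lemma intervalIntegrable_rpowDeriv (hα : 0 < α) (ha : 0 ≤ a) (hb : 0 ≤ b) :
    IntervalIntegrable (rpowDeriv α) volume a b := by
  simpa using intervalIntegrable_rpowDeriv_pow (n := 1) (by simpa using hα) ha hb

lemma intervalIntegrable_powTilt_rpowDeriv (hα : -1 < n * (α - 1)) (hα0 : 0 < α) (ha : 0 ≤ a)
    (hb : 0 ≤ b) (k : ℝ) :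
    IntervalIntegrable (fun x => powTilt n k (rpowDeriv α x)) volume a b :=
  (intervalIntegrable_rpowDeriv_pow hα ha hb).sub
    ((intervalIntegrable_rpowDeriv hα0 ha hb).const_mul _)

lemma integral_powTilt_rpowDeriv (hα : -1 < n * (α - 1)) (hα0 : 0 < α) (ha : 0 ≤ a)
    (hb : 0 ≤ b) (k : ℝ) :
    ∫ x in a..b, powTilt n k (rpowDeriv α x) =
      α ^ n / (n * α - n + 1) * (b ^ (n * (α - 1) + 1) - a ^ (n * (α - 1) + 1))
        - n * k ^ (n - 1) * (b ^ α - a ^ α) := by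
  simp only [powTilt]
  rw [intervalIntegral.integral_sub (intervalIntegrable_rpowDeriv_pow hα ha hb)
      ((intervalIntegrable_rpowDeriv hα0 ha hb).const_mul _),
    intervalIntegral.integral_const_mul, integral_rpowDeriv_pow hα ha hb,
    integral_rpowDeriv hα0 ha hb]

lemma intervalIntegrable_powTilt_rpowDeriv_one_sub (hα : -1 < n * (α - 1)) (hα0 : 0 < α)
    (ha : a ≤ 1) (hb : b ≤ 1) (k : ℝ) :
    IntervalIntegrable (fun x => powTilt n k (rpowDeriv α (1 - x))) volume a b := by
  simpa using (intervalIntegrable_powTilt_rpowDeriv hα hα0 (sub_nonneg.2 ha)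
    (sub_nonneg.2 hb) k).comp_sub_left 1

lemma integral_powTilt_rpowDeriv_one_sub (hα : -1 < n * (α - 1)) (hα0 : 0 < α) (ha : a ≤ 1)
    (hb : b ≤ 1) (k : ℝ) :
    ∫ x in a..b, powTilt n k (rpowDeriv α (1 - x)) =
      α ^ n / (n * α - n + 1) * ((1 - a) ^ (n * (α - 1) + 1) - (1 - b) ^ (n * (α - 1) + 1))
        - n * k ^ (n - 1) * ((1 - a) ^ α - (1 - b) ^ α) := by
  rw [intervalIntegral.integral_comp_sub_left (fun x => powTilt n k (rpowDeriv α x)),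
    integral_powTilt_rpowDeriv hα hα0 (sub_nonneg.2 hb) (sub_nonneg.2 ha)]

end Integrals

section Crossings

variable {α α₁ α₂ x : ℝ}

lemma rpowDeriv_pos (hα : 0 < α) (hx : 0 < x) : 0 < rpowDeriv α x :=
  mul_pos hα (rpow_pos_of_pos hx _)

lemma log_rpowDeriv (hα : 0 < α) (hx : 0 < x) : log (rpowDeriv α x) = log α + (α - 1) * log x := by
  rw [rpowDeriv, log_mul hα.ne' (rpow_pos_of_pos hx _).ne', log_rpow hx]

lemma monotoneOn_rpowDeriv (hα : 1 ≤ α) : MonotoneOn (rpowDeriv α) (Ici 0) :=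
  fun _ hx _ _ hxy => mul_le_mul_of_nonneg_left (rpow_le_rpow hx hxy (by linarith)) (by linarith)

lemma antitoneOn_rpowDeriv (hα0 : 0 ≤ α) (hα : α ≤ 1) : AntitoneOn (rpowDeriv α) (Ioi 0) :=
  fun _ hx _ _ hxy => mul_le_mul_of_nonneg_left (rpow_le_rpow_of_nonpos hx hxy (by linarith)) hα0

lemma strictConcaveOn_mul_log_add_mul_log_one_sub_s16 {p q : ℝ} (hp : 0 < p) (hq : 0 ≤ q) :
    StrictConcaveOn ℝ (Ioo 0 1) fun x => p * log x + q * log (1 - x) := by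
  refine ⟨convex_Ioo 0 1, fun x hx y hy hxy a b ha hb hab => ?_⟩
  have hlog := strictConcaveOn_log_Ioi.2 hx.1 hy.1 hxy ha hb hab
  have hlog_one_sub := strictConcaveOn_log_Ioi.concaveOn.2 (sub_pos.2 hx.2) (sub_pos.2 hy.2)
    ha.le hb.le hab
  have hseg : a • (1 - x) + b • (1 - y) = 1 - (a • x + b • y) := by
    simp only [smul_eq_mul]; linear_combination hab
  rw [hseg] at hlog_one_sub
  simp only [smul_eq_mul] at *
  nlinarith [mul_lt_mul_of_pos_left hlog hp, mul_le_mul_of_nonneg_left hlog_one_sub hq]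

lemma rpowDeriv_one_sub_le_rpowDeriv_iff (hα₁ : 0 < α₁) (hα₂ : 0 < α₂) (hx : x ∈ Ioo 0 1) :
    rpowDeriv α₂ (1 - x) ≤ rpowDeriv α₁ x ↔
      log α₂ - log α₁ ≤ (α₁ - 1) * log x + (1 - α₂) * log (1 - x) := by
  rw [← log_le_log_iff (rpowDeriv_pos hα₂ (sub_pos.2 hx.2)) (rpowDeriv_pos hα₁ hx.1),
    log_rpowDeriv hα₂ (sub_pos.2 hx.2), log_rpowDeriv hα₁ hx.1]
  constructor <;> intro h <;> linarith

lemma rpowDeriv_one_sub_lt_rpowDeriv_iff (hα₁ : 0 < α₁) (hα₂ : 0 < α₂) (hx : x ∈ Ioo 0 1) :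
    rpowDeriv α₂ (1 - x) < rpowDeriv α₁ x ↔
      log α₂ - log α₁ < (α₁ - 1) * log x + (1 - α₂) * log (1 - x) := by
  rw [← log_lt_log_iff (rpowDeriv_pos hα₂ (sub_pos.2 hx.2)) (rpowDeriv_pos hα₁ hx.1),
    log_rpowDeriv hα₂ (sub_pos.2 hx.2), log_rpowDeriv hα₁ hx.1]
  constructor <;> intro h <;> linarith

lemma rpowDeriv_one_sub_lt_rpowDeriv_of_mem_Ioo (hα₁ : 1 < α₁) (hα₂0 : 0 < α₂) (hα₂ : α₂ ≤ 1)
    {a b : ℝ} (ha : 0 < a) (hb : b < 1) (hx : x ∈ Ioo a b)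
    (hfa : rpowDeriv α₂ (1 - a) ≤ rpowDeriv α₁ a) (hfb : rpowDeriv α₂ (1 - b) ≤ rpowDeriv α₁ b) :
    rpowDeriv α₂ (1 - x) < rpowDeriv α₁ x := by
  have hab : a < b := hx.1.trans hx.2
  have ha' : a ∈ Ioo (0 : ℝ) 1 := ⟨ha, hab.trans hb⟩
  have hb' : b ∈ Ioo (0 : ℝ) 1 := ⟨ha.trans hab, hb⟩
  have hα₁0 : 0 < α₁ := by linarith
  rw [rpowDeriv_one_sub_le_rpowDeriv_iff hα₁0 hα₂0 ha'] at hfa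
  rw [rpowDeriv_one_sub_le_rpowDeriv_iff hα₁0 hα₂0 hb'] at hfb
  rw [rpowDeriv_one_sub_lt_rpowDeriv_iff hα₁0 hα₂0 ⟨ha.trans hx.1, hx.2.trans hb⟩]
  have hconc := strictConcaveOn_mul_log_add_mul_log_one_sub_s16 (sub_pos.2 hα₁) (sub_nonneg.2 hα₂)
  exact (le_min hfa hfb).trans_lt <|
    hconc.lt_on_openSegment ha' hb' hab.ne (by rwa [openSegment_eq_Ioo hab])

lemma hasDerivAt_rpow_add_one_sub_rpow_s16 (hx : x ∈ Ioo 0 1) :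
    HasDerivAt (fun y => y ^ α₁ + (1 - y) ^ α₂) (rpowDeriv α₁ x - rpowDeriv α₂ (1 - x)) x := by
  have h₁ := hasDerivAt_rpow_const (p := α₁) (Or.inl hx.1.ne')
  have h₂ := ((hasDerivAt_id' x).const_sub 1).rpow_const (p := α₂) (Or.inl (sub_pos.2 hx.2).ne')
  exact (h₁.add h₂).congr_deriv (by rw [rpowDeriv, rpowDeriv]; ring)

lemma exists_rpowDeriv_eq (hα₁ : 0 < α₁) (hα₂ : 0 < α₂) {a b : ℝ} (ha : 0 ≤ a) (hab : a < b)
    (hb : b ≤ 1) (h : a ^ α₁ + (1 - a) ^ α₂ = b ^ α₁ + (1 - b) ^ α₂) :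
    ∃ c ∈ Ioo a b, rpowDeriv α₁ c = rpowDeriv α₂ (1 - c) := by
  have hcont : Continuous fun y : ℝ => y ^ α₁ + (1 - y) ^ α₂ :=
    (continuous_rpow_const hα₁.le).add
      ((continuous_const.sub continuous_id).rpow_const fun _ => Or.inr hα₂.le)
  obtain ⟨c, hc, hc0⟩ := exists_hasDerivAt_eq_zero hab hcont.continuousOn h
    fun x hx => hasDerivAt_rpow_add_one_sub_rpow_s16 ⟨ha.trans_lt hx.1, hx.2.trans_le hb⟩
  exact ⟨c, hc, sub_eq_zero.1 hc0⟩

end Crossings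

structure IsCrossingPair (α₁ α₂ c₁ c₂ : ℝ) : Prop where
  pos : 0 < c₁
  lt : c₁ < c₂
  lt_one : c₂ < 1
  eq_left : rpowDeriv α₁ c₁ = rpowDeriv α₂ (1 - c₁)
  eq_right : rpowDeriv α₁ c₂ = rpowDeriv α₂ (1 - c₂)

namespace IsCrossingPair

variable {n : ℕ} {α₁ α₂ c₁ c₂ x : ℝ}

lemma rpowDeriv_one_sub_le_rpowDeriv (h : IsCrossingPair α₁ α₂ c₁ c₂) (hα₁ : 1 < α₁)
    (hα₂0 : 0 < α₂) (hα₂ : α₂ ≤ 1) (hx : x ∈ Icc c₁ c₂) :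
    rpowDeriv α₂ (1 - x) ≤ rpowDeriv α₁ x := by
  rcases hx.1.eq_or_lt with rfl | h₁
  · exact h.eq_left.ge
  rcases hx.2.eq_or_lt' with rfl | h₂
  · exact h.eq_right.ge
  exact (rpowDeriv_one_sub_lt_rpowDeriv_of_mem_Ioo hα₁ hα₂0 hα₂ h.pos h.lt_one ⟨h₁, h₂⟩
    h.eq_left.ge h.eq_right.ge).le

lemma rpowDeriv_le_rpowDeriv_one_sub (h : IsCrossingPair α₁ α₂ c₁ c₂) (hα₁ : 1 < α₁)
    (hα₂0 : 0 < α₂) (hα₂ : α₂ ≤ 1) (hx : x ∈ Ioo 0 1) (hx' : x ≤ c₁ ∨ c₂ ≤ x) :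
    rpowDeriv α₁ x ≤ rpowDeriv α₂ (1 - x) := by
  by_contra! hlt
  rcases hx' with hx' | hx'
  · obtain rfl | hxc := hx'.eq_or_lt
    · exact hlt.ne' h.eq_left
    exact (rpowDeriv_one_sub_lt_rpowDeriv_of_mem_Ioo hα₁ hα₂0 hα₂ hx.1 h.lt_one ⟨hxc, h.lt⟩
      hlt.le h.eq_right.ge).ne' h.eq_left
  · obtain rfl | hxc := hx'.eq_or_lt
    · exact hlt.ne' h.eq_right
    exact (rpowDeriv_one_sub_lt_rpowDeriv_of_mem_Ioo hα₁ hα₂0 hα₂ h.pos hx.2 ⟨h.lt, hxc⟩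
      h.eq_left.ge hlt.le).ne' h.eq_right

lemma rpowDeriv_one_sub_mem_uIcc (h : IsCrossingPair α₁ α₂ c₁ c₂) (hα₁ : 1 < α₁)
    (hα₂0 : 0 < α₂) (hα₂ : α₂ ≤ 1) (hx : x ∈ Ioo 0 c₂) :
    rpowDeriv α₂ (1 - x) ∈ uIcc (rpowDeriv α₁ x) (rpowDeriv α₂ (1 - c₁)) := by
  have hx1 : x < 1 := hx.2.trans h.lt_one
  have hc₁ : c₁ < 1 := h.lt.trans h.lt_one
  rcases le_total x c₁ with hxc | hcx
  · refine mem_uIcc.2 (Or.inl ⟨h.rpowDeriv_le_rpowDeriv_one_sub hα₁ hα₂0 hα₂ ⟨hx.1, hx1⟩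
      (Or.inl hxc), ?_⟩)
    exact antitoneOn_rpowDeriv hα₂0.le hα₂ (sub_pos.2 hc₁) (sub_pos.2 hx1) (by linarith)
  · refine mem_uIcc.2 (Or.inr ⟨?_, h.rpowDeriv_one_sub_le_rpowDeriv hα₁ hα₂0 hα₂ ⟨hcx, hx.2.le⟩⟩)
    exact antitoneOn_rpowDeriv hα₂0.le hα₂ (sub_pos.2 hx1) (sub_pos.2 hc₁) (by linarith)

lemma rpowDeriv_mem_uIcc (h : IsCrossingPair α₁ α₂ c₁ c₂) (hα₁ : 1 < α₁)
    (hα₂0 : 0 < α₂) (hα₂ : α₂ ≤ 1) (hx : x ∈ Ioo c₁ 1) :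
    rpowDeriv α₁ x ∈ uIcc (rpowDeriv α₂ (1 - x)) (rpowDeriv α₁ c₂) := by
  have hx0 : 0 < x := h.pos.trans hx.1
  have hc₂ : (0 : ℝ) ≤ c₂ := (h.pos.trans h.lt).le
  rcases le_total x c₂ with hxc | hcx
  · exact mem_uIcc.2 (Or.inl ⟨h.rpowDeriv_one_sub_le_rpowDeriv hα₁ hα₂0 hα₂ ⟨hx.1.le, hxc⟩,
      monotoneOn_rpowDeriv hα₁.le hx0.le hc₂ hxc⟩)
  · exact mem_uIcc.2 (Or.inr ⟨monotoneOn_rpowDeriv hα₁.le hc₂ hx0.le hcx,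
      h.rpowDeriv_le_rpowDeriv_one_sub hα₁ hα₂0 hα₂ ⟨hx0, hx.2⟩ (Or.inr hcx)⟩)

lemma integral_powTilt_one_sub_lt (h : IsCrossingPair α₁ α₂ c₁ c₂) (hn : 1 < n) (hα₁ : 1 < α₁)
    (hα₂0 : 0 < α₂) (hα₂ : α₂ ≤ 1) (hβ₂ : -1 < n * (α₂ - 1)) {x₀ : ℝ} (hx₀ : x₀ ∈ Ioo c₁ c₂) :
    ∫ x in 0..x₀, powTilt n (rpowDeriv α₂ (1 - c₁)) (rpowDeriv α₂ (1 - x)) <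
      ∫ x in 0..x₀, powTilt n (rpowDeriv α₂ (1 - c₁)) (rpowDeriv α₁ x) := by
  have hx₀0 : 0 < x₀ := h.pos.trans hx₀.1
  have hx₀1 : x₀ < 1 := hx₀.2.trans h.lt_one
  have hk : 0 ≤ rpowDeriv α₂ (1 - c₁) := (rpowDeriv_pos hα₂0 (by linarith [h.lt, h.lt_one])).le
  have hβ₁ : -1 < n * (α₁ - 1) := by
    have : (0 : ℝ) ≤ n * (α₁ - 1) := mul_nonneg n.cast_nonneg (by linarith)
    linarith
  refine intervalIntegral.integral_lt_integral_of_le_of_lt_on_Ioo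
    (intervalIntegrable_powTilt_rpowDeriv_one_sub hβ₂ hα₂0 zero_le_one hx₀1.le _)
    (intervalIntegrable_powTilt_rpowDeriv hβ₁ (by linarith) le_rfl hx₀0.le _)
    (fun x hx => powTilt_le_of_mem_uIcc hn (rpowDeriv_pos (by linarith) hx.1).le hk
      (h.rpowDeriv_one_sub_mem_uIcc hα₁ hα₂0 hα₂ ⟨hx.1, hx.2.trans hx₀.2⟩))
    hx₀.1 (fun x hx => ⟨h.pos.trans hx.1, hx.2⟩) fun x hx => ?_
  have hx0 : 0 < x := h.pos.trans hx.1
  exact powTilt_lt_of_mem_uIcc hn (rpowDeriv_pos (by linarith) hx0).le hk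
    (h.rpowDeriv_one_sub_mem_uIcc hα₁ hα₂0 hα₂ ⟨hx0, hx.2.trans hx₀.2⟩)
    (rpowDeriv_one_sub_lt_rpowDeriv_of_mem_Ioo hα₁ hα₂0 hα₂ h.pos h.lt_one
      ⟨hx.1, hx.2.trans hx₀.2⟩ h.eq_left.ge h.eq_right.ge).ne

lemma integral_powTilt_lt_one_sub (h : IsCrossingPair α₁ α₂ c₁ c₂) (hn : 1 < n) (hα₁ : 1 < α₁)
    (hα₂0 : 0 < α₂) (hα₂ : α₂ ≤ 1) (hβ₂ : -1 < n * (α₂ - 1)) {x₀ : ℝ} (hx₀ : x₀ ∈ Ioo c₁ c₂) :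
    ∫ x in x₀..1, powTilt n (rpowDeriv α₁ c₂) (rpowDeriv α₁ x) <
      ∫ x in x₀..1, powTilt n (rpowDeriv α₁ c₂) (rpowDeriv α₂ (1 - x)) := by
  have hx₀0 : 0 < x₀ := h.pos.trans hx₀.1
  have hx₀1 : x₀ < 1 := hx₀.2.trans h.lt_one
  have hk : 0 ≤ rpowDeriv α₁ c₂ := (rpowDeriv_pos (by linarith) (h.pos.trans h.lt)).le
  have hβ₁ : -1 < n * (α₁ - 1) := by
    have : (0 : ℝ) ≤ n * (α₁ - 1) := mul_nonneg n.cast_nonneg (by linarith)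
    linarith
  refine intervalIntegral.integral_lt_integral_of_le_of_lt_on_Ioo
    (intervalIntegrable_powTilt_rpowDeriv hβ₁ (by linarith) hx₀0.le zero_le_one _)
    (intervalIntegrable_powTilt_rpowDeriv_one_sub hβ₂ hα₂0 hx₀1.le le_rfl _)
    (fun x hx => powTilt_le_of_mem_uIcc hn (rpowDeriv_pos hα₂0 (sub_pos.2 hx.2)).le hk
      (h.rpowDeriv_mem_uIcc hα₁ hα₂0 hα₂ ⟨hx₀.1.trans hx.1, hx.2⟩))
    hx₀.2 (fun x hx => ⟨hx.1, hx.2.trans h.lt_one⟩) fun x hx => ?_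
  have hx1 : x < 1 := hx.2.trans h.lt_one
  exact powTilt_lt_of_mem_uIcc hn (rpowDeriv_pos hα₂0 (sub_pos.2 hx1)).le hk
    (h.rpowDeriv_mem_uIcc hα₁ hα₂0 hα₂ ⟨hx₀.1.trans hx.1, hx1⟩)
    (rpowDeriv_one_sub_lt_rpowDeriv_of_mem_Ioo hα₁ hα₂0 hα₂ h.pos h.lt_one
      ⟨hx₀.1.trans hx.1, hx.2⟩ h.eq_left.ge h.eq_right.ge).ne'

end IsCrossingPair

lemma exists_isCrossingPair {α₁ α₂ x₀ : ℝ} (hα₁ : 0 < α₁) (hα₂ : 0 < α₂) (hx₀ : x₀ ∈ Ioo 0 1)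
    (heq : 1 = (1 - x₀) ^ α₂ + x₀ ^ α₁) :
    ∃ c₁ c₂, IsCrossingPair α₁ α₂ c₁ c₂ ∧ x₀ ∈ Ioo c₁ c₂ := by
  obtain ⟨c₁, hc₁, e₁⟩ := exists_rpowDeriv_eq hα₁ hα₂ le_rfl hx₀.1 hx₀.2.le
    (by rw [zero_rpow hα₁.ne', sub_zero, one_rpow]; linarith)
  obtain ⟨c₂, hc₂, e₂⟩ := exists_rpowDeriv_eq hα₁ hα₂ hx₀.1.le hx₀.2 le_rfl
    (by rw [sub_self, zero_rpow hα₂.ne', one_rpow]; linarith)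
  exact ⟨c₁, c₂, ⟨hc₁.1, hc₁.2.trans hc₂.1, hc₂.2, e₁, e₂⟩, hc₁.2, hc₂.1⟩

theorem Qhat_gt_max (n : ℕ) (hn : 2 ≤ n) (α₁ α₂ : ℝ)
    (hα₂ : 1 - 1 / (n : ℝ) < α₂) (hα₂1 : α₂ < 1) (hα₁ : 1 < α₁)
    (Q₁ Q₂ : ℝ) (hQ₁ : Q₁ = α₁ ^ n / (n * α₁ - n + 1))
    (hQ₂ : Q₂ = α₂ ^ n / (n * α₂ - n + 1))
    (x₀ : ℝ) (hx₀ : x₀ ∈ Ioo (0 : ℝ) 1)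
    (heq : 1 = (1 - x₀) ^ α₂ + x₀ ^ α₁) :
    max Q₁ Q₂ < Q₁ * x₀ ^ (n * (α₁ - 1) + 1) + Q₂ * (1 - x₀) ^ (n * (α₂ - 1) + 1) := by
  have hβ₂ : -1 < n * (α₂ - 1) := by
    refine (div_lt_iff₀' (by positivity)).1 ?_
    rw [neg_div]
    linarith
  have hα₂0 : 0 < α₂ := by
    have : (2 : ℝ) ≤ n := by exact_mod_cast hn
    nlinarith
  have hβ₁ : 0 < n * (α₁ - 1) := mul_pos (by positivity) (by linarith)
  obtain ⟨c₁, c₂, hc, hx₀c⟩ := exists_isCrossingPair (by linarith) hα₂0 hx₀ heq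
  have hleft := hc.integral_powTilt_one_sub_lt (by omega) hα₁ hα₂0 hα₂1.le hβ₂ hx₀c
  have hright := hc.integral_powTilt_lt_one_sub (by omega) hα₁ hα₂0 hα₂1.le hβ₂ hx₀c
  rw [integral_powTilt_rpowDeriv_one_sub hβ₂ hα₂0 zero_le_one hx₀.2.le,
    integral_powTilt_rpowDeriv (by linarith) (by linarith) le_rfl hx₀.1.le] at hleft
  rw [integral_powTilt_rpowDeriv_one_sub hβ₂ hα₂0 hx₀.2.le le_rfl,
    integral_powTilt_rpowDeriv (by linarith) (by linarith) hx₀.1.le zero_le_one] at hright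
  have hx₀α₁ : x₀ ^ α₁ = 1 - (1 - x₀) ^ α₂ := by linarith
  simp only [sub_zero, sub_self, one_rpow, zero_rpow (by linarith : n * (α₁ - 1) + 1 ≠ 0),
    zero_rpow (by linarith : n * (α₂ - 1) + 1 ≠ 0), zero_rpow (by linarith : α₁ ≠ 0),
    zero_rpow hα₂0.ne', hx₀α₁] at hleft hright
  rw [← hQ₁, ← hQ₂] at hleft hright
  exact max_lt (by linarith) (by linarith)
end
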